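/- arXiv:2308.12104 — 6 statements merged into one kernel-verified Lean document; each statement's English description precedes it below -/
import Mathlib

section
/- For each S ∈ ℝ, the map ε ↦ ‖r_ε'(S)‖ is differentiable at ε = 0, and its derivative (the first variation of the stretch ν₃) equals δν₃(S) := (r'(S)/ν₃(S)) · ( η̂_{,α}(S) θ'^α(S) + f̂_{,αβ}(S) θ'^β(S) ξ^α(S) + f̂_{,α}(S) ξ'^α(S) ) (summation over repeated Greek indices α,β ∈ {1,2}). -/
noncomputable section

open scoped RealInnerProductSpace

/-- `ℝ²` with the Euclidean structure. -/
abbrev E2 : Type := EuclideanSpace ℝ (Fin 2)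
/-- `ℝ³` with the Euclidean structure. -/
abbrev E3 : Type := EuclideanSpace ℝ (Fin 3)

/-- Partial derivative `g_{,α}` of a map `g : ℝ² → ℝ³` with respect to `X^α`. -/
def pd (α : Fin 2) (g : E2 → E3) : E2 → E3 :=
  fun X => fderiv ℝ g X (EuclideanSpace.single α 1)

/-- Cross product on `ℝ³`. -/
def cross (u v : E3) : E3 :=
  WithLp.toLp 2 ![u 1 * v 2 - u 2 * v 1, u 2 * v 0 - u 0 * v 2, u 0 * v 1 - u 1 * v 0]

/-- Unit normal `n = (a₁ × a₂)/‖a₁ × a₂‖` of a parametrized surface `g`. -/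
def unitNormal (g : E2 → E3) (X : E2) : E3 :=
  ‖cross (pd 0 g X) (pd 1 g X)‖⁻¹ • cross (pd 0 g X) (pd 1 g X)

/-- Metric tensor components `g_{αβ} = a_α · a_β`. -/
def gmat (g : E2 → E3) (X : E2) : Matrix (Fin 2) (Fin 2) ℝ :=
  Matrix.of fun α β => ⟪pd α g X, pd β g X⟫

/-- Dual tangent basis `a^α = g^{αβ} a_β` (sum over `β`). -/
def dualBasis (g : E2 → E3) (X : E2) (α : Fin 2) : E3 :=
  ∑ β : Fin 2, (gmat g X)⁻¹ α β • pd β g X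

lemma e2_decomp (x : E2) : x = ∑ α : Fin 2, x α • EuclideanSpace.single α 1 := by
  ext j
  fin_cases j <;> simp [EuclideanSpace.single_apply, Fin.sum_univ_two]

lemma clm_decomp {M : Type*} [NormedAddCommGroup M] [NormedSpace ℝ M]
    (T : E2 →L[ℝ] M) (x : E2) :
    T x = ∑ α : Fin 2, x α • T (EuclideanSpace.single α 1) := by
  conv_lhs => rw [e2_decomp x]
  simp

lemma pd_pd (g : E2 → E3) (hg : ContDiff ℝ (⊤ : ℕ∞) g) (α β : Fin 2) (X : E2) :
    pd β (pd α g) X =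
      fderiv ℝ (fderiv ℝ g) X (EuclideanSpace.single β 1) (EuclideanSpace.single α 1) := by
  unfold pd
  rw [fderiv_clm_apply ((hg.fderiv_right (m := 1) (by exact WithTop.coe_le_coe.mpr le_top)).differentiable one_ne_zero X)
    (differentiableAt_const _)]
  simp

/-- First variation of the stretch `ν₃`: for each `S`, the map
`ε ↦ ‖r_ε'(S)‖` (where `r_ε = (f + εη) ∘ (θ + εξ)`) is differentiable at `ε = 0` with
derivative
`δν₃(S) = (r'(S)/ν₃(S)) · ( η̂_{,α} θ'^α + f̂_{,αβ} θ'^β ξ^α + f̂_{,α} ξ'^α )`. -/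
theorem first_variation_of_stretch
    (f η : E2 → E3) (θ ξ : ℝ → E2)
    (hf : ContDiff ℝ (⊤ : ℕ∞) f) (hη : ContDiff ℝ (⊤ : ℕ∞) η)
    (hθ : ContDiff ℝ (⊤ : ℕ∞) θ) (hξ : ContDiff ℝ (⊤ : ℕ∞) ξ)
    (himm : ∀ X : E2, cross (pd 0 f X) (pd 1 f X) ≠ 0)
    (r : ℝ → E3) (hr : r = fun S => f (θ S))
    (ν₃ : ℝ → ℝ) (hν₃ : ν₃ = fun S => ‖deriv r S‖)
    (hν : ∀ S : ℝ, ν₃ S ≠ 0) :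
    ∀ S : ℝ,
      HasDerivAt
        (fun ε : ℝ => ‖deriv (fun t => f (θ t + ε • ξ t) + ε • η (θ t + ε • ξ t)) S‖)
        ((ν₃ S)⁻¹ *
          ⟪deriv r S,
            (∑ α : Fin 2, deriv θ S α • pd α η (θ S)) +
              (∑ α : Fin 2, ∑ β : Fin 2,
                (deriv θ S β * ξ S α) • pd β (pd α f) (θ S)) +
              (∑ α : Fin 2, deriv ξ S α • pd α f (θ S))⟫)
        0 := by

  intro S
  have hfd : Differentiable ℝ f := hf.differentiable (by simp)
  have hηd : Differentiable ℝ η := hη.differentiable (by simp)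
  have hθd : Differentiable ℝ θ := hθ.differentiable (by simp)
  have hξd : Differentiable ℝ ξ := hξ.differentiable (by simp)
  have hdf : ContDiff ℝ 1 (fderiv ℝ f) := hf.fderiv_right (by exact WithTop.coe_le_coe.mpr le_top)
  have hdη : ContDiff ℝ 1 (fderiv ℝ η) := hη.fderiv_right (by exact WithTop.coe_le_coe.mpr le_top)
  -- inner curve derivative, for every ε and t
  have hline : ∀ (ε t : ℝ), HasDerivAt (fun t => θ t + ε • ξ t)
      (deriv θ t + ε • deriv ξ t) t := fun ε t =>
    ((hθd t).hasDerivAt).add (((hξd t).hasDerivAt).const_smul ε)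
  -- explicit formula for the t-derivative
  set h : ℝ → E3 := fun ε =>
    fderiv ℝ f (θ S + ε • ξ S) (deriv θ S + ε • deriv ξ S)
      + ε • fderiv ℝ η (θ S + ε • ξ S) (deriv θ S + ε • deriv ξ S) with hh_def
  have hderiv_t : ∀ ε : ℝ,
      deriv (fun t => f (θ t + ε • ξ t) + ε • η (θ t + ε • ξ t)) S = h ε := by
    intro ε
    exact (((hfd _).hasFDerivAt.comp_hasDerivAt S (hline ε S)).add
      (((hηd _).hasFDerivAt.comp_hasDerivAt S (hline ε S)).const_smul ε)).deriv
  -- derivative of ε ↦ θ S + ε • ξ S and ε ↦ deriv θ S + ε • deriv ξ S at 0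
  have g1 : HasDerivAt (fun ε : ℝ => θ S + ε • ξ S) (ξ S) 0 := by
    simpa using ((hasDerivAt_id (0:ℝ)).smul_const (ξ S)).const_add (θ S)
  have g2 : HasDerivAt (fun ε : ℝ => deriv θ S + ε • deriv ξ S) (deriv ξ S) 0 := by
    simpa using ((hasDerivAt_id (0:ℝ)).smul_const (deriv ξ S)).const_add (deriv θ S)
  -- derivative of ε ↦ fderiv f (θ S + ε ξ S)
  have gF : HasDerivAt (fun ε : ℝ => fderiv ℝ f (θ S + ε • ξ S))
      (fderiv ℝ (fderiv ℝ f) (θ S) (ξ S)) 0 := by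
    have := ((hdf.differentiable one_ne_zero (θ S + (0:ℝ) • ξ S)).hasFDerivAt).comp_hasDerivAt 0 g1
    simpa [Function.comp_def] using this
  have gFη : HasDerivAt (fun ε : ℝ => fderiv ℝ η (θ S + ε • ξ S))
      (fderiv ℝ (fderiv ℝ η) (θ S) (ξ S)) 0 := by
    have := ((hdη.differentiable one_ne_zero (θ S + (0:ℝ) • ξ S)).hasFDerivAt).comp_hasDerivAt 0 g1
    simpa [Function.comp_def] using this
  -- derivative of h at 0
  set D : E3 := fderiv ℝ (fderiv ℝ f) (θ S) (ξ S) (deriv θ S)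
      + fderiv ℝ f (θ S) (deriv ξ S) + fderiv ℝ η (θ S) (deriv θ S) with hD_def
  have hh : HasDerivAt h D 0 := by
    have hA := gF.clm_apply g2
    have hB := (hasDerivAt_id (0:ℝ)).smul (gFη.clm_apply g2)
    convert hA.add hB using 1
    · rfl
    · rfl
    · rfl
    · funext y; simp [hh_def, smul_add]
    · simp [hD_def]
  -- h 0 = deriv r S
  have hr' : HasDerivAt r (fderiv ℝ f (θ S) (deriv θ S)) S := by
    rw [hr]
    exact (hfd _).hasFDerivAt.comp_hasDerivAt S (hθd S).hasDerivAt
  have h0 : h 0 = deriv r S := by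
    rw [hr'.deriv]; simp [hh_def]
  have hν' : ‖deriv r S‖ ≠ 0 := by rw [hν₃] at hν; exact hν S
  -- norm via sqrt of inner
  have hinner : HasDerivAt (fun ε => ⟪h ε, h ε⟫) (2 * ⟪deriv r S, D⟫) 0 := by
    have := hh.inner ℝ hh
    rw [h0, real_inner_comm (deriv r S) D] at this
    rw [two_mul]
    exact this
  have hself : ⟪deriv r S, deriv r S⟫ ≠ 0 := by
    rw [real_inner_self_eq_norm_mul_norm]
    exact mul_ne_zero hν' hν'
  have hsqrt : HasDerivAt (fun ε => Real.sqrt ⟪h ε, h ε⟫)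
      (2 * ⟪deriv r S, D⟫ / (2 * Real.sqrt ⟪deriv r S, deriv r S⟫)) 0 := by
    have := hinner.sqrt (by rw [h0]; exact hself)
    rwa [h0] at this
  have hnorm_eq : ∀ ε : ℝ, Real.sqrt ⟪h ε, h ε⟫ = ‖h ε‖ := by
    intro ε
    rw [real_inner_self_eq_norm_mul_norm, Real.sqrt_mul_self (norm_nonneg _)]
  -- rewrite goal function
  have hfun : (fun ε : ℝ => ‖deriv (fun t => f (θ t + ε • ξ t) + ε • η (θ t + ε • ξ t)) S‖)
      = fun ε => Real.sqrt ⟪h ε, h ε⟫ := by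
    funext ε; rw [hderiv_t ε, hnorm_eq]
  rw [hfun]
  convert hsqrt using 1
  -- identify the derivative value
  have hsqrt_norm : Real.sqrt ⟪deriv r S, deriv r S⟫ = ν₃ S := by
    rw [real_inner_self_eq_norm_mul_norm, Real.sqrt_mul_self (norm_nonneg _), hν₃]
  rw [hsqrt_norm]
  have hDval : (∑ α : Fin 2, deriv θ S α • pd α η (θ S)) +
      (∑ α : Fin 2, ∑ β : Fin 2, (deriv θ S β * ξ S α) • pd β (pd α f) (θ S)) +
      (∑ α : Fin 2, deriv ξ S α • pd α f (θ S)) = D := by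
    have hsym : ∀ v w : E2, fderiv ℝ (fderiv ℝ f) (θ S) v w
        = fderiv ℝ (fderiv ℝ f) (θ S) w v :=
      second_derivative_symmetric (fun y => (hfd y).hasFDerivAt)
        ((hdf.differentiable one_ne_zero (θ S)).hasFDerivAt)
    have e1 : (∑ α : Fin 2, deriv θ S α • pd α η (θ S))
        = fderiv ℝ η (θ S) (deriv θ S) := by
      rw [clm_decomp (fderiv ℝ η (θ S)) (deriv θ S)]; rfl
    have e3 : (∑ α : Fin 2, deriv ξ S α • pd α f (θ S))
        = fderiv ℝ f (θ S) (deriv ξ S) := by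
      rw [clm_decomp (fderiv ℝ f (θ S)) (deriv ξ S)]; rfl
    have e2 : (∑ α : Fin 2, ∑ β : Fin 2, (deriv θ S β * ξ S α) • pd β (pd α f) (θ S))
        = fderiv ℝ (fderiv ℝ f) (θ S) (ξ S) (deriv θ S) := by
      rw [clm_decomp (fderiv ℝ (fderiv ℝ f) (θ S)) (ξ S), ContinuousLinearMap.sum_apply]
      refine Finset.sum_congr rfl fun α _ => ?_
      rw [ContinuousLinearMap.smul_apply,
        clm_decomp (fderiv ℝ (fderiv ℝ f) (θ S) (EuclideanSpace.single α 1)) (deriv θ S),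
        Finset.smul_sum]
      refine Finset.sum_congr rfl fun β _ => ?_
      rw [pd_pd f hf, smul_smul, hsym, mul_comm]
    rw [e1, e2, e3, hD_def]
    abel
  rw [hDval]
  have hνS : ν₃ S ≠ 0 := hν S
  field_simp
end
end

section
/- For each S ∈ ℝ, the map ε ↦ n_ε(θ_ε(S)) is differentiable at ε = 0, and the first variation of the director d₁ = n ∘ θ equals δd₁(S) := (d/dε)|_{ε=0} n_ε(θ_ε(S)) = − ( n̂(S) · η̂_{,μ}(S) ) â^μ(S) + n̂_{,α}(S) ξ^α(S) (summation over repeated Greek indices μ,α ∈ {1,2}). -/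
noncomputable section

open scoped RealInnerProductSpace

/-! ### Auxiliary lemmas -/

lemma fvd_comp_coord {n : ℕ} {A : ℝ → EuclideanSpace ℝ (Fin n)}
    {A' : EuclideanSpace ℝ (Fin n)} {t : ℝ} (hA : HasDerivAt A A' t)
    (i : Fin n) : HasDerivAt (fun s => A s i) (A' i) t :=
  (EuclideanSpace.proj i : EuclideanSpace ℝ (Fin n) →L[ℝ] ℝ).hasFDerivAt.comp_hasDerivAt t hA

lemma fvd_hasDerivAt_euclidean {n : ℕ} {A : ℝ → EuclideanSpace ℝ (Fin n)}
    {A' : EuclideanSpace ℝ (Fin n)} {t : ℝ}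
    (h : ∀ i, HasDerivAt (fun s => A s i) (A' i) t) : HasDerivAt A A' t := by
  have h1 : HasDerivAt (fun s => (EuclideanSpace.equiv (Fin n) ℝ) (A s))
      ((EuclideanSpace.equiv (Fin n) ℝ) A') t := hasDerivAt_pi.2 h
  have h2 := ((EuclideanSpace.equiv (Fin n) ℝ).symm.hasFDerivAt).comp_hasDerivAt t h1
  exact h2

lemma fvd_hasDerivAt_cross {A B : ℝ → E3} {A' B' : E3} {t : ℝ}
    (hA : HasDerivAt A A' t) (hB : HasDerivAt B B' t) :
    HasDerivAt (fun s => cross (A s) (B s)) (cross A' (B t) + cross (A t) B') t := by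
  refine fvd_hasDerivAt_euclidean fun i => ?_
  have h0 := fvd_comp_coord hA
  have h1 := fvd_comp_coord hB
  fin_cases i
  · exact (((h0 1).mul (h1 2)).sub ((h0 2).mul (h1 1))).congr_deriv (by simp [cross]; ring)
  · exact (((h0 2).mul (h1 0)).sub ((h0 0).mul (h1 2))).congr_deriv (by simp [cross]; ring)
  · exact (((h0 0).mul (h1 1)).sub ((h0 1).mul (h1 0))).congr_deriv (by simp [cross]; ring)

lemma fvd_hasDerivAt_norm {E : Type*} [NormedAddCommGroup E] [InnerProductSpace ℝ E]
    {c : ℝ → E} {v : E} {t : ℝ} (hc : HasDerivAt c v t) (h0 : c t ≠ 0) :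
    HasDerivAt (fun s => ‖c s‖) (‖c t‖⁻¹ * ⟪c t, v⟫) t := by
  have hq : HasDerivAt (fun s => ⟪c s, c s⟫) (⟪c t, v⟫ + ⟪v, c t⟫) t := hc.inner ℝ hc
  have hne : ⟪c t, c t⟫ ≠ 0 := by
    simpa [real_inner_self_eq_norm_sq, pow_eq_zero_iff] using norm_ne_zero_iff.2 h0
  have hs := (Real.hasDerivAt_sqrt hne).comp t hq
  have hnorm : (fun s => ‖c s‖) = fun s => Real.sqrt ⟪c s, c s⟫ := by
    funext s; rw [norm_eq_sqrt_real_inner]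
  rw [hnorm]
  refine hs.congr_deriv ?_
  rw [← norm_eq_sqrt_real_inner, real_inner_comm v (c t)]
  field_simp
  ring

lemma fvd_hasDerivAt_normalize {E : Type*} [NormedAddCommGroup E] [InnerProductSpace ℝ E]
    {c : ℝ → E} {v : E} {t : ℝ} (hc : HasDerivAt c v t) (h0 : c t ≠ 0) :
    HasDerivAt (fun s => ‖c s‖⁻¹ • c s)
      (‖c t‖⁻¹ • v - (‖c t‖⁻¹ ^ 3 * ⟪c t, v⟫) • c t) t := by
  have hn := fvd_hasDerivAt_norm hc h0
  have hnne : ‖c t‖ ≠ 0 := norm_ne_zero_iff.2 h0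
  have hinv := hn.inv hnne
  have h2 := hinv.smul hc
  refine h2.congr_deriv ?_
  match_scalars <;> field_simp <;> try ring
  exact inv_mul_cancel₀ hnne

lemma fvd_cross_add_left (x y v : E3) : cross (x + y) v = cross x v + cross y v := by
  ext i
  fin_cases i <;> simp [cross] <;> ring

lemma fvd_cross_add_right (u x y : E3) : cross u (x + y) = cross u x + cross u y := by
  ext i
  fin_cases i <;> simp [cross] <;> ring

lemma fvd_lagrange (u v : E3) : ⟪cross u v, cross u v⟫ = ⟪u,u⟫ * ⟪v,v⟫ - ⟪u,v⟫ ^ 2 := by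
  simp only [cross, PiLp.inner_apply, RCLike.inner_apply, Fin.sum_univ_three, conj_trivial,
    Matrix.cons_val_zero, Matrix.cons_val_one, Matrix.cons_val_two, Matrix.head_cons, Matrix.tail_cons]
  ring

lemma fvd_key_identity (u v b1 b2 : E3) :
    ⟪cross u v, cross u v⟫ • (cross b1 v + cross u b2)
      - ⟪cross u v, cross b1 v + cross u b2⟫ • cross u v
    = -(⟪cross u v, b1⟫ • (⟪v,v⟫ • u - ⟪u,v⟫ • v)
        + ⟪cross u v, b2⟫ • (⟪u,u⟫ • v - ⟪u,v⟫ • u)) := by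
  ext i
  fin_cases i <;>
    simp only [cross, PiLp.inner_apply, RCLike.inner_apply, Fin.sum_univ_three, conj_trivial,
      Matrix.cons_val_zero, Matrix.cons_val_one, Matrix.cons_val_two, Matrix.head_cons,
      Matrix.tail_cons, PiLp.add_apply, PiLp.sub_apply, PiLp.smul_apply, PiLp.neg_apply,
      smul_eq_mul, PiLp.toLp_apply, Fin.reduceFinMk, Fin.isValue] <;> ring

lemma fvd_claimB (u v b1 b2 : E3) (h : cross u v ≠ 0) :
    ‖cross u v‖⁻¹ • (cross b1 v + cross u b2)
      - (‖cross u v‖⁻¹ ^ 3 * ⟪cross u v, cross b1 v + cross u b2⟫) • cross u v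
    = -(⟪‖cross u v‖⁻¹ • cross u v, b1⟫ •
          ((!![⟪u,u⟫, ⟪u,v⟫; ⟪v,u⟫, ⟪v,v⟫])⁻¹ 0 0 • u
            + (!![⟪u,u⟫, ⟪u,v⟫; ⟪v,u⟫, ⟪v,v⟫])⁻¹ 0 1 • v)
        + ⟪‖cross u v‖⁻¹ • cross u v, b2⟫ •
          ((!![⟪u,u⟫, ⟪u,v⟫; ⟪v,u⟫, ⟪v,v⟫])⁻¹ 1 0 • u
            + (!![⟪u,u⟫, ⟪u,v⟫; ⟪v,u⟫, ⟪v,v⟫])⁻¹ 1 1 • v)) := by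
  have hr : ‖cross u v‖ ≠ 0 := norm_ne_zero_iff.2 h
  have hd : ⟪cross u v, cross u v⟫ = ‖cross u v‖ ^ 2 := real_inner_self_eq_norm_sq _
  have hdd : ⟪cross u v, cross u v⟫ ≠ 0 := by rw [hd]; positivity
  have hlag := fvd_lagrange u v
  have hdet : (!![⟪u,u⟫, ⟪u,v⟫; ⟪v,u⟫, ⟪v,v⟫] : Matrix (Fin 2) (Fin 2) ℝ).det
      = ⟪cross u v, cross u v⟫ := by
    rw [Matrix.det_fin_two_of, hlag, real_inner_comm v u]; ring
  have hMinv : (!![⟪u,u⟫, ⟪u,v⟫; ⟪v,u⟫, ⟪v,v⟫] : Matrix (Fin 2) (Fin 2) ℝ)⁻¹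
      = ⟪cross u v, cross u v⟫⁻¹ • !![⟪v,v⟫, -⟪u,v⟫; -⟪v,u⟫, ⟪u,u⟫] := by
    rw [Matrix.inv_def, Matrix.adjugate_fin_two_of, hdet, Ring.inverse_eq_inv']
  have h1 : ‖cross u v‖⁻¹ • (cross b1 v + cross u b2)
      - (‖cross u v‖⁻¹ ^ 3 * ⟪cross u v, cross b1 v + cross u b2⟫) • cross u v
      = (‖cross u v‖⁻¹ * ⟪cross u v, cross u v⟫⁻¹) •
          (⟪cross u v, cross u v⟫ • (cross b1 v + cross u b2)
            - ⟪cross u v, cross b1 v + cross u b2⟫ • cross u v) := by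
    rw [hd, smul_sub, smul_smul, smul_smul, mul_assoc,
      inv_mul_cancel₀ (pow_ne_zero 2 hr), mul_one, ← inv_pow]
    ring_nf
  rw [h1, fvd_key_identity, hMinv, real_inner_comm v u]
  simp only [real_inner_smul_left, Matrix.smul_apply, Matrix.of_apply, smul_eq_mul,
    Matrix.cons_val', Matrix.cons_val_zero, Matrix.cons_val_one, Matrix.head_cons,
    Matrix.empty_val', Matrix.cons_val_fin_one, Matrix.head_fin_const]
  match_scalars <;> field_simp <;> first | ring1 | tauto

lemma fvd_line_deriv {n : ℕ} {F : Type*} [NormedAddCommGroup F] [NormedSpace ℝ F]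
    {g : EuclideanSpace ℝ (Fin n) → F} (X₀ w : EuclideanSpace ℝ (Fin n))
    (hg : DifferentiableAt ℝ g X₀) :
    HasDerivAt (fun t : ℝ => g (X₀ + t • w)) (fderiv ℝ g X₀ w) 0 := by
  have hγ : HasDerivAt (fun t : ℝ => X₀ + t • w) w 0 := by
    simpa using ((hasDerivAt_id (0:ℝ)).smul_const w).const_add X₀
  have h0 : X₀ + (0:ℝ) • w = X₀ := by simp
  have hg' : HasFDerivAt g (fderiv ℝ g X₀) (X₀ + (0:ℝ) • w) := by rw [h0]; exact hg.hasFDerivAt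
  exact hg'.comp_hasDerivAt 0 hγ

/-- First variation of the director `d₁ = n ∘ θ`: for each `S`, the map
`ε ↦ n_ε(θ_ε(S))` is differentiable at `ε = 0` with derivative
`δd₁(S) = − ( n̂ · η̂_{,μ} ) â^μ + n̂_{,α} ξ^α` (evaluated at `S`, summed over `μ, α`). -/
theorem first_variation_of_director_d1
    (f η : E2 → E3) (θ ξ : ℝ → E2)
    (hf : ContDiff ℝ (⊤ : ℕ∞) f) (hη : ContDiff ℝ (⊤ : ℕ∞) η)
    (hθ : ContDiff ℝ (⊤ : ℕ∞) θ) (hξ : ContDiff ℝ (⊤ : ℕ∞) ξ)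
    (himm : ∀ X : E2, cross (pd 0 f X) (pd 1 f X) ≠ 0) :
    ∀ S : ℝ,
      HasDerivAt
        (fun ε : ℝ => unitNormal (fun Y => f Y + ε • η Y) (θ S + ε • ξ S))
        ((-∑ μ : Fin 2, ⟪unitNormal f (θ S), pd μ η (θ S)⟫ • dualBasis f (θ S) μ) +
          ∑ α : Fin 2, ξ S α • pd α (unitNormal f) (θ S))
        0 := by
  intro S
  set X₀ := θ S with hX₀def
  set w := ξ S with hwdef
  -- smoothness of partial derivatives
  have hpdf : ∀ α, ContDiff ℝ (⊤ : ℕ∞) (pd α f) := fun α =>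
    (hf.fderiv_right (by simp)).clm_apply contDiff_const
  have hpdη : ∀ α, ContDiff ℝ (⊤ : ℕ∞) (pd α η) := fun α =>
    (hη.fderiv_right (by simp)).clm_apply contDiff_const
  -- representation of the perturbed partial derivatives
  have hrepr : ∀ (α : Fin 2) (ε : ℝ) (X : E2),
      pd α (fun Y => f Y + ε • η Y) X = pd α f X + ε • pd α η X := by
    intro α ε X
    simp only [pd]
    rw [fderiv_fun_add ((hf.differentiable (by simp)) X) (((hη.differentiable (by simp)) X).fun_const_smul ε),
      fderiv_fun_const_smul ((hη.differentiable (by simp)) X) ε]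
    simp
  -- the curves ε ↦ a_α(X₀ + ε w) + ε b_α(X₀ + ε w)
  have hAcurve : ∀ α : Fin 2,
      HasDerivAt (fun ε : ℝ => pd α f (X₀ + ε • w) + ε • pd α η (X₀ + ε • w))
        (fderiv ℝ (pd α f) X₀ w + pd α η X₀) 0 := by
    intro α
    have h1 : HasDerivAt (fun ε : ℝ => pd α f (X₀ + ε • w)) (fderiv ℝ (pd α f) X₀ w) 0 :=
      fvd_line_deriv X₀ w (((hpdf α).differentiable (by simp)) X₀)
    have h2 : HasDerivAt (fun ε : ℝ => pd α η (X₀ + ε • w)) (fderiv ℝ (pd α η) X₀ w) 0 :=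
      fvd_line_deriv X₀ w (((hpdη α).differentiable (by simp)) X₀)
    have h3 := (hasDerivAt_id (0:ℝ)).smul h2
    simp only [id_eq, zero_smul, add_zero, one_smul, zero_add] at h3
    exact h1.add h3
  -- rewrite the function in terms of these curves
  have funEq : (fun ε : ℝ => unitNormal (fun Y => f Y + ε • η Y) (X₀ + ε • w))
      = fun ε : ℝ =>
        ‖cross (pd 0 f (X₀ + ε • w) + ε • pd 0 η (X₀ + ε • w))
            (pd 1 f (X₀ + ε • w) + ε • pd 1 η (X₀ + ε • w))‖⁻¹ •
          cross (pd 0 f (X₀ + ε • w) + ε • pd 0 η (X₀ + ε • w))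
            (pd 1 f (X₀ + ε • w) + ε • pd 1 η (X₀ + ε • w)) := by
    funext ε
    simp only [unitNormal, hrepr]
  rw [funEq]
  -- derivative of the cross product curve
  have hC := fvd_hasDerivAt_cross (hAcurve 0) (hAcurve 1)
  simp only [zero_smul, add_zero] at hC
  have hC0 : cross (pd 0 f (X₀ + (0:ℝ) • w) + (0:ℝ) • pd 0 η (X₀ + (0:ℝ) • w))
      (pd 1 f (X₀ + (0:ℝ) • w) + (0:ℝ) • pd 1 η (X₀ + (0:ℝ) • w)) ≠ 0 := by
    simpa using himm X₀
  have hN := fvd_hasDerivAt_normalize hC hC0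
  simp only [zero_smul, add_zero] at hN
  -- abbreviations
  set u := pd 0 f X₀ with hu
  set v := pd 1 f X₀ with hv
  set b1 := pd 0 η X₀ with hb1
  set b2 := pd 1 η X₀ with hb2
  set D0 := fderiv ℝ (pd 0 f) X₀ w with hD0
  set D1 := fderiv ℝ (pd 1 f) X₀ w with hD1
  -- split the derivative into the ξ-part and the η-part
  have hsplit : cross (D0 + b1) v + cross u (D1 + b2)
      = (cross D0 v + cross u D1) + (cross b1 v + cross u b2) := by
    rw [fvd_cross_add_left, fvd_cross_add_right]; abel
  rw [hsplit] at hN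
  set Vξ := cross D0 v + cross u D1 with hVξ
  set Vη := cross b1 v + cross u b2 with hVη
  have hPdecomp : ‖cross u v‖⁻¹ • (Vξ + Vη)
      - (‖cross u v‖⁻¹ ^ 3 * ⟪cross u v, Vξ + Vη⟫) • cross u v
      = (‖cross u v‖⁻¹ • Vη - (‖cross u v‖⁻¹ ^ 3 * ⟪cross u v, Vη⟫) • cross u v)
        + (‖cross u v‖⁻¹ • Vξ - (‖cross u v‖⁻¹ ^ 3 * ⟪cross u v, Vξ⟫) • cross u v) := by
    rw [inner_add_right]
    match_scalars <;> ring
  rw [hPdecomp] at hN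
  -- ClaimA : the ξ-part equals Σ ξ^α n_{,α}
  have hNcont : ContDiff ℝ (⊤ : ℕ∞) (unitNormal f) := by
    have hG : ContDiff ℝ (⊤ : ℕ∞) (fun X => cross (pd 0 f X) (pd 1 f X)) := by
      rw [contDiff_euclidean]
      intro i
      have h0 := contDiff_euclidean.1 (hpdf 0)
      have h1 := contDiff_euclidean.1 (hpdf 1)
      fin_cases i <;>
      · simp only [cross, Matrix.cons_val_zero, Matrix.cons_val_one, Matrix.head_cons,
          Matrix.cons_val_two, Matrix.tail_cons]
        exact ((h0 _).mul (h1 _)).sub ((h0 _).mul (h1 _))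
    have hnormne : ∀ X : E2, ‖cross (pd 0 f X) (pd 1 f X)‖ ≠ 0 :=
      fun X => norm_ne_zero_iff.2 (himm X)
    have : ContDiff ℝ (⊤ : ℕ∞) (fun X : E2 => ‖cross (pd 0 f X) (pd 1 f X)‖⁻¹ •
        cross (pd 0 f X) (pd 1 f X)) :=
      ((hG.norm ℝ himm).inv hnormne).smul hG
    exact this
  have hNd : HasDerivAt (fun t : ℝ => unitNormal f (X₀ + t • w))
      (fderiv ℝ (unitNormal f) X₀ w) 0 :=
    fvd_line_deriv X₀ w ((hNcont.differentiable (by simp)) X₀)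
  have hNd' : HasDerivAt (fun t : ℝ => unitNormal f (X₀ + t • w))
      (‖cross u v‖⁻¹ • Vξ - (‖cross u v‖⁻¹ ^ 3 * ⟪cross u v, Vξ⟫) • cross u v) 0 := by
    have hc1 : HasDerivAt (fun t : ℝ => pd 0 f (X₀ + t • w)) D0 0 :=
      fvd_line_deriv X₀ w (((hpdf 0).differentiable (by simp)) X₀)
    have hc2 : HasDerivAt (fun t : ℝ => pd 1 f (X₀ + t • w)) D1 0 :=
      fvd_line_deriv X₀ w (((hpdf 1).differentiable (by simp)) X₀)
    have hCf := fvd_hasDerivAt_cross hc1 hc2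
    simp only [zero_smul, add_zero] at hCf
    have hCf0 : cross (pd 0 f (X₀ + (0:ℝ) • w)) (pd 1 f (X₀ + (0:ℝ) • w)) ≠ 0 := by
      simpa using himm X₀
    have := fvd_hasDerivAt_normalize hCf hCf0
    simp only [zero_smul, add_zero] at this
    exact this
  have hwexpand : w = ∑ α : Fin 2, w α • EuclideanSpace.single α (1:ℝ) := by
    ext j
    fin_cases j <;> simp [Fin.sum_univ_two, EuclideanSpace.single_apply]
  have hclaimA : ‖cross u v‖⁻¹ • Vξ - (‖cross u v‖⁻¹ ^ 3 * ⟪cross u v, Vξ⟫) • cross u v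
      = ∑ α : Fin 2, w α • pd α (unitNormal f) X₀ := by
    rw [hNd'.unique hNd]
    conv_lhs => rw [hwexpand]
    rw [map_sum]
    refine Finset.sum_congr rfl fun α _ => ?_
    rw [ContinuousLinearMap.map_smul]
    rfl
  -- ClaimB : the η-part
  have hgmat : gmat f X₀ = !![⟪u,u⟫, ⟪u,v⟫; ⟪v,u⟫, ⟪v,v⟫] := by
    ext α β
    fin_cases α <;> fin_cases β <;> simp [gmat] <;> rfl
  have hclaimB : ‖cross u v‖⁻¹ • Vη - (‖cross u v‖⁻¹ ^ 3 * ⟪cross u v, Vη⟫) • cross u v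
      = -∑ μ : Fin 2, ⟪unitNormal f X₀, pd μ η X₀⟫ • dualBasis f X₀ μ := by
    have hB := fvd_claimB u v b1 b2 (himm X₀)
    rw [hVη, hB]
    simp only [dualBasis, hgmat, Fin.sum_univ_two, unitNormal, ← hu, ← hv, ← hb1, ← hb2]
  rw [hclaimA, hclaimB] at hN
  exact hN
end
end

section
/- For each X ∈ ℝ² and each α ∈ {1,2}, the map ε ↦ [∂n_ε/∂X^α](X) is differentiable at ε = 0, and (d/dε)|_{ε=0} [∂n_ε/∂X^α](X) = − ( n·η_{,β} ) a^β_{,α} − ( n_{,α}·η_{,β} ) a^β − ( n·η_{,βα} ) a^β, all quantities evaluated at X and summed over β ∈ {1,2}. -/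
noncomputable section

open scoped RealInnerProductSpace

namespace FVN

lemma inner_cross_left (u v : E3) : ⟪cross u v, u⟫ = 0 := by
  simp [cross, PiLp.inner_apply, Fin.sum_univ_three]; ring

lemma inner_cross_right (u v : E3) : ⟪cross u v, v⟫ = 0 := by
  simp [cross, PiLp.inner_apply, Fin.sum_univ_three]; ring

/-- swap first and third slot of the scalar triple product -/
lemma triple_swap13 (u v w : E3) : ⟪cross u v, w⟫ = -⟪cross w v, u⟫ := by
  simp [cross, PiLp.inner_apply, Fin.sum_univ_three]; ring

/-- swap second and third slot of the scalar triple product -/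
lemma triple_swap23 (u v w : E3) : ⟪cross u v, w⟫ = -⟪cross u w, v⟫ := by
  simp [cross, PiLp.inner_apply, Fin.sum_univ_three]; ring

lemma cross_expand (a b c d : E3) (ε : ℝ) :
    cross (a + ε • b) (c + ε • d) =
      cross a c + ε • (cross b c + cross a d) + (ε * ε) • cross b d := by
  ext i
  fin_cases i <;>
    simp [cross, PiLp.add_apply, PiLp.smul_apply, smul_eq_mul] <;> ring

lemma lagrange (u v : E3) :
    ⟪u,u⟫ * ⟪v,v⟫ - ⟪u,v⟫ * ⟪v,u⟫ = ⟪cross u v, cross u v⟫ := by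
  simp only [cross, PiLp.inner_apply, Fin.sum_univ_three, RCLike.inner_apply,
    conj_trivial, Matrix.cons_val_zero, Matrix.cons_val_one, Matrix.head_cons,
    Matrix.cons_val_two, Matrix.tail_cons]; ring

lemma ortho_zero (t u v : E3) (h1 : ⟪t,u⟫ = 0) (h2 : ⟪t,v⟫ = 0)
    (h3 : ⟪t, cross u v⟫ = 0) (hc : cross u v ≠ 0) : t = 0 := by
  have key : ⟪t,t⟫ * ⟪cross u v, cross u v⟫ = 0 := by
    simp only [cross, PiLp.inner_apply, Fin.sum_univ_three, RCLike.inner_apply,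
      conj_trivial, Matrix.cons_val_zero, Matrix.cons_val_one, Matrix.head_cons,
      Matrix.cons_val_two, Matrix.tail_cons] at h1 h2 h3 ⊢
    have iden : (t 0 * t 0 + t 1 * t 1 + t 2 * t 2) *
        ((u 1 * v 2 - u 2 * v 1) * (u 1 * v 2 - u 2 * v 1) +
         (u 2 * v 0 - u 0 * v 2) * (u 2 * v 0 - u 0 * v 2) +
         (u 0 * v 1 - u 1 * v 0) * (u 0 * v 1 - u 1 * v 0)) =
        (t 0 * (u 1 * v 2 - u 2 * v 1) + t 1 * (u 2 * v 0 - u 0 * v 2) +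
          t 2 * (u 0 * v 1 - u 1 * v 0))^2 +
        (((t 0 * v 0 + t 1 * v 1 + t 2 * v 2) * u 0 - (t 0 * u 0 + t 1 * u 1 + t 2 * u 2) * v 0)^2 +
         ((t 0 * v 0 + t 1 * v 1 + t 2 * v 2) * u 1 - (t 0 * u 0 + t 1 * u 1 + t 2 * u 2) * v 1)^2 +
         ((t 0 * v 0 + t 1 * v 1 + t 2 * v 2) * u 2 - (t 0 * u 0 + t 1 * u 1 + t 2 * u 2) * v 2)^2) := by
      ring
    rw [iden]
    rw [show t 0 * u 0 + t 1 * u 1 + t 2 * u 2 = 0 by linear_combination h1,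
      show t 0 * v 0 + t 1 * v 1 + t 2 * v 2 = 0 by linear_combination h2,
      show t 0 * (u 1 * v 2 - u 2 * v 1) + t 1 * (u 2 * v 0 - u 0 * v 2) +
        t 2 * (u 0 * v 1 - u 1 * v 0) = 0 by linear_combination h3]
    ring
  have hc2 : ⟪cross u v, cross u v⟫ ≠ 0 := fun h => hc (inner_self_eq_zero.mp h)
  rcases mul_eq_zero.mp key with h | h
  · exact inner_self_eq_zero.mp h
  · exact absurd h hc2

lemma contDiff_pd {g : E2 → E3} (hg : ContDiff ℝ (⊤:ℕ∞) g) (α : Fin 2) :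
    ContDiff ℝ (⊤:ℕ∞) (pd α g) :=
  (hg.fderiv_right (le_refl _)).clm_apply contDiff_const

lemma contDiff_cross : ContDiff ℝ (⊤:ℕ∞) (fun p : E3 × E3 => cross p.1 p.2) := by
  rw [contDiff_euclidean]
  intro i
  have h1 : ∀ j : Fin 3, ContDiff ℝ (⊤:ℕ∞) (fun p : E3 × E3 => p.1 j) :=
    fun j => ((EuclideanSpace.proj j : E3 →L[ℝ] ℝ).contDiff.comp contDiff_fst : ContDiff ℝ _ _)
  have h2 : ∀ j : Fin 3, ContDiff ℝ (⊤:ℕ∞) (fun p : E3 × E3 => p.2 j) :=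
    fun j => ((EuclideanSpace.proj j : E3 →L[ℝ] ℝ).contDiff.comp contDiff_snd : ContDiff ℝ _ _)
  fin_cases i <;>
    simp only [cross, Matrix.cons_val_zero, Matrix.cons_val_one, Matrix.head_cons,
      Matrix.cons_val_two, Matrix.tail_cons] <;>
    exact ((h1 _).mul (h2 _)).sub ((h1 _).mul (h2 _))

/-- determinant of the metric is the squared norm of the cross product -/
lemma det_gmat (f : E2 → E3) (Y : E2) :
    (gmat f Y).det = ⟪cross (pd 0 f Y) (pd 1 f Y), cross (pd 0 f Y) (pd 1 f Y)⟫ := by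
  rw [Matrix.det_fin_two]
  have := lagrange (pd 0 f Y) (pd 1 f Y)
  simpa [gmat] using this

lemma det_gmat_ne (f : E2 → E3) (Y : E2)
    (himm : cross (pd 0 f Y) (pd 1 f Y) ≠ 0) : (gmat f Y).det ≠ 0 := by
  rw [det_gmat]
  exact fun h => himm (inner_self_eq_zero.mp h)

lemma dualBasis_inner_pd (f : E2 → E3) (Y : E2)
    (himm : cross (pd 0 f Y) (pd 1 f Y) ≠ 0) (β γ : Fin 2) :
    ⟪dualBasis f Y β, pd γ f Y⟫ = if β = γ then 1 else 0 := by
  have hdet : IsUnit (gmat f Y).det := (det_gmat_ne f Y himm).isUnit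
  have : ⟪dualBasis f Y β, pd γ f Y⟫ = ((gmat f Y)⁻¹ * gmat f Y) β γ := by
    rw [Matrix.mul_apply]
    simp only [dualBasis, sum_inner, real_inner_smul_left]
    rfl
  rw [this, Matrix.nonsing_inv_mul _ hdet, Matrix.one_apply]

lemma dualBasis_inner_cross (f : E2 → E3) (Y : E2) (β : Fin 2) :
    ⟪dualBasis f Y β, cross (pd 0 f Y) (pd 1 f Y)⟫ = 0 := by
  have h0 : ⟪pd 0 f Y, cross (pd 0 f Y) (pd 1 f Y)⟫ = 0 := by
    rw [real_inner_comm]; exact inner_cross_left _ _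
  have h1 : ⟪pd 1 f Y, cross (pd 0 f Y) (pd 1 f Y)⟫ = 0 := by
    rw [real_inner_comm]; exact inner_cross_right _ _
  simp only [dualBasis, sum_inner, inner_add_left, real_inner_smul_left, Fin.sum_univ_two, h0, h1,
    mul_zero, add_zero]

end FVN

namespace FVN

lemma partA (f η : E2 → E3) (Y : E2) (himm : cross (pd 0 f Y) (pd 1 f Y) ≠ 0) :
    HasDerivAt (fun ε : ℝ =>
        ‖cross (pd 0 f Y + ε • pd 0 η Y) (pd 1 f Y + ε • pd 1 η Y)‖⁻¹ •
          cross (pd 0 f Y + ε • pd 0 η Y) (pd 1 f Y + ε • pd 1 η Y))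
      (-∑ β : Fin 2, ⟪unitNormal f Y, pd β η Y⟫ • dualBasis f Y β) 0 := by
  set a0 := pd 0 f Y with ha0
  set a1 := pd 1 f Y with ha1
  set b0 := pd 0 η Y with hb0
  set b1 := pd 1 η Y with hb1
  set c0 := cross a0 a1 with hc0
  set c1 := cross b0 a1 + cross a0 b1 with hc1
  set c2 := cross b0 b1 with hc2
  set γfun : ℝ → E3 := fun ε => c0 + ε • c1 + (ε * ε) • c2 with hγfun
  have hγ0 : γfun 0 = c0 := by simp [hγfun]
  have hnc0 : ‖c0‖ ≠ 0 := norm_ne_zero_iff.mpr himm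
  have hq0 : ⟪c0, c0⟫ ≠ 0 := fun h => himm (inner_self_eq_zero.mp h)
  -- derivative of γfun
  have hγ : HasDerivAt γfun c1 0 := by
    have h1 : HasDerivAt (fun ε : ℝ => ε • c1) c1 0 := by
      simpa using (hasDerivAt_id (0:ℝ)).smul_const c1
    have h2 : HasDerivAt (fun ε : ℝ => (ε * ε) • c2) 0 0 := by
      simpa using ((hasDerivAt_id (0:ℝ)).mul (hasDerivAt_id (0:ℝ))).smul_const c2
    have := ((hasDerivAt_const (0:ℝ) c0).add h1).add h2
    simp only [zero_add, add_zero] at this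
    exact this
  -- derivative of the inner product
  have hq : HasDerivAt (fun ε => ⟪γfun ε, γfun ε⟫) (⟪c0, c1⟫ + ⟪c1, c0⟫) 0 := by
    have := hγ.inner ℝ hγ
    rwa [hγ0] at this
  -- derivative of the norm
  have hsq : Real.sqrt ⟪c0, c0⟫ = ‖c0‖ := (norm_eq_sqrt_real_inner c0).symm
  have hr : HasDerivAt (fun ε => Real.sqrt ⟪γfun ε, γfun ε⟫)
      (1 / (2 * ‖c0‖) * (⟪c0, c1⟫ + ⟪c1, c0⟫)) 0 := by
    have h0' : ⟪γfun 0, γfun 0⟫ ≠ 0 := by rw [hγ0]; exact hq0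
    have := (Real.hasDerivAt_sqrt h0').comp 0 hq
    simpa only [Function.comp_def, hγ0, hsq] using this
  have hrne : Real.sqrt ⟪γfun 0, γfun 0⟫ ≠ 0 := by rw [hγ0, hsq]; exact hnc0
  set s : ℝ := -(1 / (2 * ‖c0‖) * (⟪c0, c1⟫ + ⟪c1, c0⟫)) / ‖c0‖ ^ 2 with hs
  have hri : HasDerivAt (fun ε => (Real.sqrt ⟪γfun ε, γfun ε⟫)⁻¹) s 0 := by
    have := hr.inv hrne
    simp only [hγ0, hsq] at this
    exact this
  have hD : HasDerivAt (fun ε => (Real.sqrt ⟪γfun ε, γfun ε⟫)⁻¹ • γfun ε)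
      (‖c0‖⁻¹ • c1 + s • c0) 0 := by
    have := hri.smul hγ
    simp only [hγ0, hsq] at this
    exact this
  -- identify the function with the original one
  have hfun : (fun ε : ℝ =>
      ‖cross (a0 + ε • b0) (a1 + ε • b1)‖⁻¹ • cross (a0 + ε • b0) (a1 + ε • b1)) =
      fun ε => (Real.sqrt ⟪γfun ε, γfun ε⟫)⁻¹ • γfun ε := by
    funext ε
    rw [hγfun]
    simp only [cross_expand, norm_eq_sqrt_real_inner]
    rfl
  -- identify the derivative with the claimed formula
  set n := unitNormal f Y with hn
  have hnval : n = ‖c0‖⁻¹ • c0 := rfl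
  set S : E3 := ∑ β : Fin 2, ⟪n, pd β η Y⟫ • dualBasis f Y β with hS
  have hkey : (‖c0‖⁻¹ • c1 + s • c0) + S = 0 := by
    apply ortho_zero _ a0 a1 _ _ _ himm
    · -- inner with a0
      have e1 : ⟪c0, a0⟫ = 0 := inner_cross_left a0 a1
      have e2 : ⟪c1, a0⟫ = -⟪c0, b0⟫ := by
        rw [hc1, inner_add_left, triple_swap13 b0 a1 a0, hc0]
        have : ⟪cross a0 b1, a0⟫ = 0 := inner_cross_left a0 b1
        rw [this, triple_swap13 a0 a1 b0]
        ring
      have e3 : ∀ β, ⟪dualBasis f Y β, a0⟫ = if β = 0 then 1 else 0 := fun β =>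
        dualBasis_inner_pd f Y himm β 0
      have e4 : ⟪n, b0⟫ = ‖c0‖⁻¹ * ⟪c0, b0⟫ := by
        rw [hnval, real_inner_smul_left]
      simp only [inner_add_left, sum_inner, real_inner_smul_left, e1, e2, e3,
        Fin.sum_univ_two, hS]
      simp [← hb0, e4]
    · -- inner with a1
      have e1 : ⟪c0, a1⟫ = 0 := inner_cross_right a0 a1
      have e2 : ⟪c1, a1⟫ = -⟪c0, b1⟫ := by
        rw [hc1, inner_add_left, triple_swap23 a0 b1 a1, hc0]
        have h21 : ⟪cross b0 a1, a1⟫ = 0 := inner_cross_right b0 a1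
        rw [h21, triple_swap23 a0 a1 b1]
        ring
      have e3 : ∀ β, ⟪dualBasis f Y β, a1⟫ = if β = 1 then 1 else 0 := fun β =>
        dualBasis_inner_pd f Y himm β 1
      have e4 : ⟪n, b1⟫ = ‖c0‖⁻¹ * ⟪c0, b1⟫ := by
        rw [hnval, real_inner_smul_left]
      simp only [inner_add_left, sum_inner, real_inner_smul_left, e1, e2, e3,
        Fin.sum_univ_two, hS]
      simp [← hb1, e4]
    · -- inner with c0 = cross a0 a1
      have e3 : ∀ β, ⟪dualBasis f Y β, c0⟫ = 0 := fun β => dualBasis_inner_cross f Y β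
      have e5 : ⟪c0, c0⟫ = ‖c0‖ ^ 2 := real_inner_self_eq_norm_sq c0
      have e6 : ⟪c1, c0⟫ = ⟪c0, c1⟫ := real_inner_comm c0 c1
      rw [← hc0]
      simp only [inner_add_left, sum_inner, real_inner_smul_left, e3, hS,
        Fin.sum_univ_two, mul_zero, add_zero, e5, e6, hs]
      field_simp
      ring
  have hderiv : (‖c0‖⁻¹ • c1 + s • c0) = -S := eq_neg_of_add_eq_zero_left hkey
  rw [hfun]
  rw [hS] at hderiv
  exact hderiv ▸ hD

end FVN

namespace FVN

lemma one_le_infty : ((⊤:ℕ∞) : WithTop ℕ∞) ≠ 0 := by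
  simp
lemma two_le_infty : minSmoothness ℝ 2 ≤ ((⊤:ℕ∞) : WithTop ℕ∞) := by
  rw [minSmoothness_of_isRCLikeNormedField]
  refine le_trans ?_ (WithTop.coe_le_coe.mpr (le_top : (2:ℕ∞) ≤ ⊤))
  norm_num

/-- the joint cross-product field -/
def cc (f η : E2 → E3) (p : ℝ × E2) : E3 :=
  cross (pd 0 f p.2 + p.1 • pd 0 η p.2) (pd 1 f p.2 + p.1 • pd 1 η p.2)

/-- the joint normal field -/
def NN (f η : E2 → E3) (p : ℝ × E2) : E3 := ‖cc f η p‖⁻¹ • cc f η p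

/-- the first variation of the normal, as a field on `E2` -/
def wfun (f η : E2 → E3) (Y : E2) : E3 :=
  -∑ β : Fin 2, ⟪unitNormal f Y, pd β η Y⟫ • dualBasis f Y β

variable {f η : E2 → E3}

lemma contDiff_cc (hf : ContDiff ℝ (⊤:ℕ∞) f) (hη : ContDiff ℝ (⊤:ℕ∞) η) :
    ContDiff ℝ (⊤:ℕ∞) (cc f η) := by
  have h : ∀ (g : E2 → E3) (hg : ContDiff ℝ (⊤:ℕ∞) g) (β : Fin 2),
      ContDiff ℝ (⊤:ℕ∞) (fun p : ℝ × E2 => pd β g p.2) :=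
    fun g hg β => (contDiff_pd hg β).comp contDiff_snd
  exact contDiff_cross.comp
    ((((h f hf 0).add (contDiff_fst.smul (h η hη 0)))).prodMk
      (((h f hf 1).add (contDiff_fst.smul (h η hη 1)))))

lemma cc_zero (f η : E2 → E3) (Y : E2) :
    cc f η (0, Y) = cross (pd 0 f Y) (pd 1 f Y) := by simp [cc]

lemma contDiffAt_NN (hf : ContDiff ℝ (⊤:ℕ∞) f) (hη : ContDiff ℝ (⊤:ℕ∞) η)
    {p : ℝ × E2} (hp : cc f η p ≠ 0) : ContDiffAt ℝ (⊤:ℕ∞) (NN f η) p := by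
  have hc := contDiff_cc hf hη
  exact (((hc.contDiffAt.norm ℝ hp).inv (norm_ne_zero_iff.mpr hp)).smul hc.contDiffAt : _)

lemma pd_add_smul (hf : ContDiff ℝ (⊤:ℕ∞) f) (hη : ContDiff ℝ (⊤:ℕ∞) η) (ε : ℝ) (β : Fin 2) :
    pd β (fun Z => f Z + ε • η Z) = fun Y => pd β f Y + ε • pd β η Y := by
  funext Y
  have h1 : HasFDerivAt (fun Z => f Z + ε • η Z)
      (fderiv ℝ f Y + ε • fderiv ℝ η Y) Y :=
    ((hf.differentiable one_le_infty).differentiableAt.hasFDerivAt).add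
      (((hη.differentiable one_le_infty).differentiableAt.hasFDerivAt).const_smul ε)
  show fderiv ℝ (fun Z => f Z + ε • η Z) Y (EuclideanSpace.single β 1) = _
  rw [h1.fderiv]
  rfl

lemma unitNormal_eq (hf : ContDiff ℝ (⊤:ℕ∞) f) (hη : ContDiff ℝ (⊤:ℕ∞) η) (ε : ℝ) :
    unitNormal (fun Z => f Z + ε • η Z) = fun Y => NN f η (ε, Y) := by
  funext Y
  show ‖cross (pd 0 (fun Z => f Z + ε • η Z) Y) (pd 1 (fun Z => f Z + ε • η Z) Y)‖⁻¹ •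
      cross (pd 0 (fun Z => f Z + ε • η Z) Y) (pd 1 (fun Z => f Z + ε • η Z) Y) = _
  rw [pd_add_smul hf hη ε 0, pd_add_smul hf hη ε 1]
  rfl

lemma unitNormal_f_eq (hf : ContDiff ℝ (⊤:ℕ∞) f) (hη : ContDiff ℝ (⊤:ℕ∞) η) :
    unitNormal f = fun Y => NN f η (0, Y) := by
  have h0 : (fun Z => f Z + (0:ℝ) • η Z) = f := by funext Z; simp
  have := unitNormal_eq hf hη 0
  rwa [h0] at this

lemma hasDerivAt_NN_eps (hf : ContDiff ℝ (⊤:ℕ∞) f) (hη : ContDiff ℝ (⊤:ℕ∞) η)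
    (himm : ∀ X : E2, cross (pd 0 f X) (pd 1 f X) ≠ 0) (Y : E2) :
    HasDerivAt (fun ε => NN f η (ε, Y))
      (fderiv ℝ (NN f η) (0, Y) ((1:ℝ), (0:E2))) 0 := by
  have h0 : cc f η (0, Y) ≠ 0 := by rw [cc_zero]; exact himm Y
  have hd : HasFDerivAt (NN f η) (fderiv ℝ (NN f η) (0, Y)) (0, Y) :=
    ((contDiffAt_NN hf hη h0).differentiableAt one_le_infty).hasFDerivAt
  exact hd.comp_hasDerivAt 0 ((hasDerivAt_id (0:ℝ)).prodMk (hasDerivAt_const 0 Y))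

lemma fderiv_NN_e1 (hf : ContDiff ℝ (⊤:ℕ∞) f) (hη : ContDiff ℝ (⊤:ℕ∞) η)
    (himm : ∀ X : E2, cross (pd 0 f X) (pd 1 f X) ≠ 0) (Y : E2) :
    fderiv ℝ (NN f η) (0, Y) ((1:ℝ), (0:E2)) = wfun f η Y :=
  (hasDerivAt_NN_eps hf hη himm Y).unique (partA f η Y (himm Y))

lemma differentiableAt_dualBasis (hf : ContDiff ℝ (⊤:ℕ∞) f)
    (himm : ∀ Y : E2, cross (pd 0 f Y) (pd 1 f Y) ≠ 0) (X : E2) (β : Fin 2) :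
    DifferentiableAt ℝ (fun Y => dualBasis f Y β) X := by
  have hg : ∀ δ γ : Fin 2, Differentiable ℝ (fun Y => gmat f Y δ γ) := fun δ γ =>
    (((contDiff_pd hf δ).inner ℝ (contDiff_pd hf γ)).differentiable one_le_infty : _)
  have hdet : Differentiable ℝ (fun Y => (gmat f Y).det) := by
    have h : (fun Y => (gmat f Y).det) =
        fun Y => gmat f Y 0 0 * gmat f Y 1 1 - gmat f Y 0 1 * gmat f Y 1 0 :=
      funext fun Y => Matrix.det_fin_two _
    rw [h]
    exact ((hg 0 0).mul (hg 1 1)).sub ((hg 0 1).mul (hg 1 0))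
  have hdetne : ∀ Y, (gmat f Y).det ≠ 0 := fun Y => det_gmat_ne f Y (himm Y)
  have hadj : ∀ δ γ : Fin 2, Differentiable ℝ (fun Y => (gmat f Y).adjugate δ γ) := by
    intro δ γ
    fin_cases δ <;> fin_cases γ
    · have h : (fun Y => (gmat f Y).adjugate 0 0) = fun Y => gmat f Y 1 1 :=
        funext fun Y => by rw [Matrix.adjugate_fin_two]; rfl
      simpa only [Fin.zero_eta, h] using hg 1 1
    · have h : (fun Y => (gmat f Y).adjugate 0 1) = fun Y => -(gmat f Y 0 1) :=
        funext fun Y => by rw [Matrix.adjugate_fin_two]; rfl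
      simpa only [Fin.zero_eta, Fin.mk_one, h] using (hg 0 1).fun_neg
    · have h : (fun Y => (gmat f Y).adjugate 1 0) = fun Y => -(gmat f Y 1 0) :=
        funext fun Y => by rw [Matrix.adjugate_fin_two]; rfl
      simpa only [Fin.zero_eta, Fin.mk_one, h] using (hg 1 0).fun_neg
    · have h : (fun Y => (gmat f Y).adjugate 1 1) = fun Y => gmat f Y 0 0 :=
        funext fun Y => by rw [Matrix.adjugate_fin_two]; rfl
      simpa only [Fin.mk_one, h] using hg 0 0
  have hinv : ∀ δ γ : Fin 2, Differentiable ℝ (fun Y => (gmat f Y)⁻¹ δ γ) := by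
    intro δ γ
    have h : (fun Y => (gmat f Y)⁻¹ δ γ) =
        fun Y => ((gmat f Y).det)⁻¹ * (gmat f Y).adjugate δ γ := by
      funext Y
      rw [Matrix.inv_def, Ring.inverse_eq_inv', Matrix.smul_apply, smul_eq_mul]
    rw [h]
    exact (hdet.inv hdetne).mul (hadj δ γ)
  have hpd : ∀ γ : Fin 2, Differentiable ℝ (pd γ f) := fun γ =>
    (contDiff_pd hf γ).differentiable one_le_infty
  have : DifferentiableAt ℝ (fun Y => ∑ γ : Fin 2, (gmat f Y)⁻¹ β γ • pd γ f Y) X := by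
    apply DifferentiableAt.fun_sum
    intro γ _
    exact ((hinv β γ) X).smul ((hpd γ) X)
  exact this

end FVN

namespace FVN

variable {f η : E2 → E3}

lemma differentiableAt_unitNormal (hf : ContDiff ℝ (⊤:ℕ∞) f) (hη : ContDiff ℝ (⊤:ℕ∞) η)
    (himm : ∀ Y : E2, cross (pd 0 f Y) (pd 1 f Y) ≠ 0) (X : E2) :
    DifferentiableAt ℝ (unitNormal f) X := by
  rw [unitNormal_f_eq hf hη]
  have h0 : cc f η (0, X) ≠ 0 := by rw [cc_zero]; exact himm X
  have h1 : DifferentiableAt ℝ (NN f η) ((0:ℝ), X) :=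
    (contDiffAt_NN hf hη h0).differentiableAt one_le_infty
  have h2 : DifferentiableAt ℝ (fun Y : E2 => (((0:ℝ), Y) : ℝ × E2)) X :=
    (differentiableAt_const (0:ℝ)).prodMk differentiableAt_id
  exact (h1.comp X h2 : _)

lemma hasFDerivAt_wfun (hf : ContDiff ℝ (⊤:ℕ∞) f) (hη : ContDiff ℝ (⊤:ℕ∞) η)
    (himm : ∀ Y : E2, cross (pd 0 f Y) (pd 1 f Y) ≠ 0) (X : E2) :
    HasFDerivAt (wfun f η)
      (-∑ β : Fin 2,
        (⟪unitNormal f X, pd β η X⟫ • fderiv ℝ (fun Y => dualBasis f Y β) X +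
          ((fderivInnerCLM ℝ (unitNormal f X, pd β η X)).comp
            ((fderiv ℝ (unitNormal f) X).prod (fderiv ℝ (pd β η) X))).smulRight
            (dualBasis f X β))) X := by
  have hnX : HasFDerivAt (unitNormal f) (fderiv ℝ (unitNormal f) X) X :=
    (differentiableAt_unitNormal hf hη himm X).hasFDerivAt
  have hbX : ∀ β : Fin 2, HasFDerivAt (pd β η) (fderiv ℝ (pd β η) X) X := fun β =>
    ((((contDiff_pd hη β).differentiable one_le_infty) X).hasFDerivAt)
  have hdX : ∀ β : Fin 2, HasFDerivAt (fun Y => dualBasis f Y β)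
      (fderiv ℝ (fun Y => dualBasis f Y β) X) X := fun β =>
    (differentiableAt_dualBasis hf himm X β).hasFDerivAt
  have hterm : ∀ β : Fin 2,
      HasFDerivAt (fun Y => ⟪unitNormal f Y, pd β η Y⟫ • dualBasis f Y β)
        (⟪unitNormal f X, pd β η X⟫ • fderiv ℝ (fun Y => dualBasis f Y β) X +
          ((fderivInnerCLM ℝ (unitNormal f X, pd β η X)).comp
            ((fderiv ℝ (unitNormal f) X).prod (fderiv ℝ (pd β η) X))).smulRight
            (dualBasis f X β)) X := fun β => (hnX.inner ℝ (hbX β)).smul (hdX β)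
  exact (HasFDerivAt.sum (fun β (_ : β ∈ Finset.univ) => hterm β)).neg

lemma pd_wfun (hf : ContDiff ℝ (⊤:ℕ∞) f) (hη : ContDiff ℝ (⊤:ℕ∞) η)
    (himm : ∀ Y : E2, cross (pd 0 f Y) (pd 1 f Y) ≠ 0) (X : E2) (α : Fin 2) :
    pd α (wfun f η) X = -∑ β : Fin 2,
      (⟪unitNormal f X, pd β η X⟫ • pd α (fun Y => dualBasis f Y β) X +
        ⟪pd α (unitNormal f) X, pd β η X⟫ • dualBasis f X β +
        ⟪unitNormal f X, pd α (pd β η) X⟫ • dualBasis f X β) := by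
  have h := (hasFDerivAt_wfun hf hη himm X).fderiv
  show fderiv ℝ (wfun f η) X (EuclideanSpace.single α 1) = _
  rw [h]
  simp only [ContinuousLinearMap.neg_apply, ContinuousLinearMap.sum_apply,
    ContinuousLinearMap.add_apply, ContinuousLinearMap.coe_smul', Pi.smul_apply,
    ContinuousLinearMap.smulRight_apply, ContinuousLinearMap.comp_apply,
    ContinuousLinearMap.prod_apply, fderivInnerCLM_apply]
  refine neg_inj.mpr (Finset.sum_congr rfl fun β _ => ?_)
  have e1 : pd α (fun Y => dualBasis f Y β) X =
      fderiv ℝ (fun Y => dualBasis f Y β) X (EuclideanSpace.single α 1) := rfl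
  have e2 : pd α (unitNormal f) X =
      fderiv ℝ (unitNormal f) X (EuclideanSpace.single α 1) := rfl
  have e3 : pd α (pd β η) X = fderiv ℝ (pd β η) X (EuclideanSpace.single α 1) := rfl
  rw [e1, e2, e3, add_smul]
  abel

end FVN


open FVN

/-- First variation of the derivative of the unit normal: for each `X`
and `α`, the map `ε ↦ [∂n_ε/∂X^α](X)` is differentiable at `ε = 0` with derivative
`− ( n·η_{,β} ) a^β_{,α} − ( n_{,α}·η_{,β} ) a^β − ( n·η_{,βα} ) a^β` (summed over `β`). -/
theorem first_variation_of_normal_derivative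
    (f η : E2 → E3)
    (hf : ContDiff ℝ (⊤ : ℕ∞) f) (hη : ContDiff ℝ (⊤ : ℕ∞) η)
    (himm : ∀ X : E2, cross (pd 0 f X) (pd 1 f X) ≠ 0) :
    ∀ (X : E2) (α : Fin 2),
      HasDerivAt
        (fun ε : ℝ => pd α (unitNormal (fun Y => f Y + ε • η Y)) X)
        (-∑ β : Fin 2,
          (⟪unitNormal f X, pd β η X⟫ • pd α (fun Y => dualBasis f Y β) X +
            ⟪pd α (unitNormal f) X, pd β η X⟫ • dualBasis f X β +
            ⟪unitNormal f X, pd α (pd β η) X⟫ • dualBasis f X β))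
        0 := by
  intro X α
  have hf' : ContDiff ℝ (⊤:ℕ∞) f := hf.of_le (by simp)
  have hη' : ContDiff ℝ (⊤:ℕ∞) η := hη.of_le (by simp)
  set e : E2 := EuclideanSpace.single α 1 with he
  -- rewrite the function of ε through the joint normal field `NN`
  have hfun : (fun ε : ℝ => pd α (unitNormal (fun Y => f Y + ε • η Y)) X) =
      fun ε : ℝ => fderiv ℝ (fun Y => NN f η (ε, Y)) X e := by
    funext ε
    show fderiv ℝ (unitNormal (fun Y => f Y + ε • η Y)) X e = _
    rw [unitNormal_eq hf' hη' ε]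
  rw [hfun]
  have h0X : cc f η ((0:ℝ), X) ≠ 0 := by rw [cc_zero]; exact himm X
  have hNX : ContDiffAt ℝ (⊤:ℕ∞) (NN f η) ((0:ℝ), X) := contDiffAt_NN hf' hη' h0X
  have hF2 : ContDiffAt ℝ (⊤:ℕ∞) (fderiv ℝ (NN f η)) ((0:ℝ), X) :=
    hNX.fderiv_right (le_refl _)
  set K := fderiv ℝ (fderiv ℝ (NN f η)) ((0:ℝ), X) with hKdef
  have hKd : HasFDerivAt (fderiv ℝ (NN f η)) K ((0:ℝ), X) :=
    (hF2.differentiableAt one_le_infty).hasFDerivAt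
  -- derivative in ε of the full derivative, evaluated at (0, e)
  have hg1 : HasDerivAt (fun ε : ℝ => fderiv ℝ (NN f η) (ε, X)) (K ((1:ℝ), (0:E2))) 0 :=
    hKd.comp_hasDerivAt 0 ((hasDerivAt_id (0:ℝ)).prodMk (hasDerivAt_const 0 X))
  have hg : HasDerivAt (fun ε : ℝ => fderiv ℝ (NN f η) (ε, X) (((0:ℝ), e) : ℝ × E2))
      (K ((1:ℝ), (0:E2)) (((0:ℝ), e) : ℝ × E2)) 0 := by
    have := hg1.clm_apply (hasDerivAt_const (0:ℝ) (((0:ℝ), e) : ℝ × E2))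
    simpa using this
  -- eventual equality between the partial derivative in Y and the full derivative
  have hmem : ∀ᶠ ε : ℝ in nhds 0, cc f η (ε, X) ≠ 0 := by
    have hcont : ContinuousAt (fun ε : ℝ => cc f η (ε, X)) 0 :=
      ((contDiff_cc hf' hη').continuous.comp
        (continuous_id.prodMk continuous_const)).continuousAt
    have hs : {(0:E3)}ᶜ ∈ nhds (cc f η ((0:ℝ), X)) := isOpen_compl_singleton.mem_nhds h0X
    exact hcont hs
  have hfeq : (fun ε : ℝ => fderiv ℝ (fun Y => NN f η (ε, Y)) X e) =ᶠ[nhds 0]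
      fun ε : ℝ => fderiv ℝ (NN f η) (ε, X) (((0:ℝ), e) : ℝ × E2) := by
    filter_upwards [hmem] with ε hε
    have hdiff : HasFDerivAt (NN f η) (fderiv ℝ (NN f η) (ε, X)) (ε, X) :=
      ((contDiffAt_NN hf' hη' hε).differentiableAt one_le_infty).hasFDerivAt
    have hcurve : HasFDerivAt (fun Y : E2 => ((ε, Y) : ℝ × E2))
        ((0 : E2 →L[ℝ] ℝ).prod (ContinuousLinearMap.id ℝ E2)) X :=
      (hasFDerivAt_const ε X).prodMk (hasFDerivAt_id X)
    have hcomp : HasFDerivAt (fun Y : E2 => NN f η (ε, Y))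
        ((fderiv ℝ (NN f η) (ε, X)).comp
          ((0 : E2 →L[ℝ] ℝ).prod (ContinuousLinearMap.id ℝ E2))) X := hdiff.comp X hcurve
    rw [hcomp.fderiv]
    simp
  have hDer : HasDerivAt (fun ε : ℝ => fderiv ℝ (fun Y => NN f η (ε, Y)) X e)
      (K ((1:ℝ), (0:E2)) (((0:ℝ), e) : ℝ × E2)) 0 := hg.congr_of_eventuallyEq hfeq
  -- symmetry of the second derivative
  have hsym : K ((1:ℝ), (0:E2)) (((0:ℝ), e) : ℝ × E2) =
      K (((0:ℝ), e) : ℝ × E2) ((1:ℝ), (0:E2)) :=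
    (hNX.isSymmSndFDerivAt two_le_infty) _ _
  -- the other mixed partial: derivative in Y of the ε-derivative
  have hvK : HasFDerivAt (fun Y : E2 => fderiv ℝ (NN f η) ((0:ℝ), Y))
      (K.comp ((0 : E2 →L[ℝ] ℝ).prod (ContinuousLinearMap.id ℝ E2))) X :=
    hKd.comp X ((hasFDerivAt_const (0:ℝ) X).prodMk (hasFDerivAt_id X))
  have hv' : HasFDerivAt
      (fun Y : E2 => fderiv ℝ (NN f η) ((0:ℝ), Y) (((1:ℝ), (0:E2)) : ℝ × E2))
      ((fderiv ℝ (NN f η) ((0:ℝ), X)).comp (0 : E2 →L[ℝ] (ℝ × E2)) +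
        (K.comp ((0 : E2 →L[ℝ] ℝ).prod (ContinuousLinearMap.id ℝ E2))).flip
          (((1:ℝ), (0:E2)) : ℝ × E2)) X :=
    hvK.clm_apply (hasFDerivAt_const (((1:ℝ), (0:E2)) : ℝ × E2) X)
  have hveq : (fun Y : E2 => fderiv ℝ (NN f η) ((0:ℝ), Y) (((1:ℝ), (0:E2)) : ℝ × E2)) =
      wfun f η := funext fun Y => fderiv_NN_e1 hf' hη' himm Y
  rw [hveq] at hv'
  have hpdw : pd α (wfun f η) X = K (((0:ℝ), e) : ℝ × E2) ((1:ℝ), (0:E2)) := by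
    show fderiv ℝ (wfun f η) X e = _
    rw [hv'.fderiv]
    simp
  have hval : (-∑ β : Fin 2,
      (⟪unitNormal f X, pd β η X⟫ • pd α (fun Y => dualBasis f Y β) X +
        ⟪pd α (unitNormal f) X, pd β η X⟫ • dualBasis f X β +
        ⟪unitNormal f X, pd α (pd β η) X⟫ • dualBasis f X β)) =
      K ((1:ℝ), (0:E2)) (((0:ℝ), e) : ℝ × E2) := by
    rw [← pd_wfun hf' hη' himm X α, hpdw, ← hsym]
  rw [hval]
  exact hDer
end
end

section
/- (Proposition 4) For each S ∈ ℝ and each α ∈ {1,2}, the map ε ↦ [∂n_ε/∂X^α](θ_ε(S)) is differentiable at ε = 0, and δn̂_{,α}(S) := (d/dε)|_{ε=0} [∂n_ε/∂X^α](θ_ε(S)) = − ( n̂·η̂_{,μ} ) â^μ_{,α} − ( n̂_{,α}·η̂_{,μ} ) â^μ − ( n̂·η̂_{,μα} ) â^μ + n̂_{,αβ} ξ^β, all quantities evaluated at S (i.e. surface quantities evaluated at θ(S)), with summation over repeated Greek indices μ,β ∈ {1,2}. -/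
noncomputable section

open scoped RealInnerProductSpace

open scoped ContDiff

lemma inner3 (u v : E3) : ⟪u, v⟫ = u 0 * v 0 + u 1 * v 1 + u 2 * v 2 := by
  simp [PiLp.inner_apply, Fin.sum_univ_three, RCLike.inner_apply, conj_trivial]; ring

lemma cross_apply0 (u v : E3) : cross u v 0 = u 1 * v 2 - u 2 * v 1 := rfl
lemma cross_apply1 (u v : E3) : cross u v 1 = u 2 * v 0 - u 0 * v 2 := rfl
lemma cross_apply2 (u v : E3) : cross u v 2 = u 0 * v 1 - u 1 * v 0 := rfl

lemma inner_cross (u v w : E3) : ⟪cross u v, w⟫ = ⟪cross v w, u⟫ := by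
  simp only [inner3, cross_apply0, cross_apply1, cross_apply2]; ring

lemma inner_cross_self_left (u v : E3) : ⟪cross u v, u⟫ = 0 := by
  simp only [inner3, cross_apply0, cross_apply1, cross_apply2]; ring

lemma inner_cross_self_right (u v : E3) : ⟪cross u v, v⟫ = 0 := by
  simp only [inner3, cross_apply0, cross_apply1, cross_apply2]; ring

lemma lagrange (u v : E3) :
    ⟪cross u v, cross u v⟫ = ⟪u,u⟫ * ⟪v,v⟫ - ⟪u,v⟫^2 := by
  simp only [inner3, cross_apply0, cross_apply1, cross_apply2]; ring

/-- triple expansion -/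
lemma cross_cross_expand (u v w : E3) :
    cross u (cross v w) = ⟪u,w⟫ • v - ⟪u,v⟫ • w := by
  ext i
  fin_cases i <;>
    simp [cross, inner3, PiLp.sub_apply, PiLp.smul_apply, smul_eq_mul,
      Fin.sum_univ_three] <;> ring

/-- If `w` is orthogonal to `u`, `v` and `cross u v ≠ 0`, then `w = 0`. -/
lemma eq_zero_of_orth (u v w : E3) (hc : cross u v ≠ 0)
    (h0 : ⟪w, u⟫ = 0) (h1 : ⟪w, v⟫ = 0) (h2 : ⟪w, cross u v⟫ = 0) : w = 0 := by
  have hwc : cross w (cross u v) = 0 := by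
    rw [cross_cross_expand, h0, h1]; simp
  have hl := lagrange w (cross u v)
  rw [hwc, h2] at hl
  have hcc : ⟪cross u v, cross u v⟫ ≠ 0 := inner_self_ne_zero.mpr hc
  have : ⟪w, w⟫ = 0 := by
    have h0' : (0:ℝ) = ⟪w,w⟫ * ⟪cross u v, cross u v⟫ - 0^2 := by simpa using hl
    have := h0'.symm
    simp only [sub_eq_zero] at this
    rcases mul_eq_zero.mp (by linarith [this] : ⟪w,w⟫ * ⟪cross u v, cross u v⟫ = 0) with h | h
    · exact h
    · exact absurd h hcc
  exact inner_self_eq_zero.mp this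

open scoped ContDiff

lemma contDiff_coord3 (i : Fin 3) : ContDiff ℝ ∞ (fun v : E3 => v i) :=
  (EuclideanSpace.proj (𝕜 := ℝ) (ι := Fin 3) i).contDiff

lemma contDiff_cross : ContDiff ℝ ∞ (fun p : E3 × E3 => cross p.1 p.2) := by
  rw [contDiff_euclidean]
  intro i
  fin_cases i
  · simp only [cross_apply0]
    exact (((contDiff_coord3 1).comp contDiff_fst).mul
      ((contDiff_coord3 2).comp contDiff_snd)).sub
      (((contDiff_coord3 2).comp contDiff_fst).mul
      ((contDiff_coord3 1).comp contDiff_snd))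
  · simp only [cross_apply1]
    exact (((contDiff_coord3 2).comp contDiff_fst).mul
      ((contDiff_coord3 0).comp contDiff_snd)).sub
      (((contDiff_coord3 0).comp contDiff_fst).mul
      ((contDiff_coord3 2).comp contDiff_snd))
  · simp only [cross_apply2]
    exact (((contDiff_coord3 0).comp contDiff_fst).mul
      ((contDiff_coord3 1).comp contDiff_snd)).sub
      (((contDiff_coord3 1).comp contDiff_fst).mul
      ((contDiff_coord3 0).comp contDiff_snd))

lemma ContDiff.cross_comp {E : Type*} [NormedAddCommGroup E] [NormedSpace ℝ E]
    {u v : E → E3} (hu : ContDiff ℝ ∞ u) (hv : ContDiff ℝ ∞ v) :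
    ContDiff ℝ ∞ (fun x => cross (u x) (v x)) :=
  contDiff_cross.comp (hu.prodMk hv)

lemma pd_contDiff {g : E2 → E3} (hg : ContDiff ℝ ∞ g) (α : Fin 2) :
    ContDiff ℝ ∞ (pd α g) := by
  have h1 : ContDiff ℝ ∞ (fderiv ℝ g) := hg.fderiv_right (by simp)
  exact (ContinuousLinearMap.apply ℝ E3 (EuclideanSpace.single α 1)).contDiff.comp h1

section Main
variable (f η : E2 → E3)

/-- `cc f η (ε, X)` is the cross product of the tangent vectors of `f + ε•η` at `X`. -/
def cc : ℝ × E2 → E3 :=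
  fun p => cross (pd 0 f p.2 + p.1 • pd 0 η p.2) (pd 1 f p.2 + p.1 • pd 1 η p.2)

/-- The normalized normal field of the perturbed surface, jointly in `(ε, X)`. -/
def GG : ℝ × E2 → E3 := fun p => ‖cc f η p‖⁻¹ • cc f η p

variable {f η}

lemma pd_add_smul (hf : ContDiff ℝ ∞ f) (hη : ContDiff ℝ ∞ η) (ε : ℝ) (α : Fin 2) (X : E2) :
    pd α (fun Y => f Y + ε • η Y) X = pd α f X + ε • pd α η X := by
  have hfd : DifferentiableAt ℝ f X := (hf.differentiable (by norm_num)).differentiableAt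
  have hηd : DifferentiableAt ℝ η X := (hη.differentiable (by norm_num)).differentiableAt
  have : fderiv ℝ (fun Y => f Y + ε • η Y) X
      = fderiv ℝ f X + ε • fderiv ℝ η X := by
    rw [fderiv_fun_add hfd (hηd.fun_const_smul ε), fderiv_fun_const_smul hηd ε]
  simp [pd, this]

lemma cc_zero (X : E2) : cc f η (0, X) = cross (pd 0 f X) (pd 1 f X) := by
  simp [cc]

lemma unitNormal_pert (hf : ContDiff ℝ ∞ f) (hη : ContDiff ℝ ∞ η) (ε : ℝ) (X : E2) :
    unitNormal (fun Y => f Y + ε • η Y) X = GG f η (ε, X) := by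
  simp only [unitNormal, GG, cc, pd_add_smul hf hη]

lemma unitNormal_base (hf : ContDiff ℝ ∞ f) (hη : ContDiff ℝ ∞ η) (X : E2) : unitNormal f X = GG f η (0, X) := by
  have : f = fun Y => f Y + (0:ℝ) • η Y := by funext Y; simp
  calc unitNormal f X = unitNormal (fun Y => f Y + (0:ℝ) • η Y) X := by rw [← this]
  _ = GG f η (0, X) := unitNormal_pert hf hη 0 X

lemma contDiff_cc (hf : ContDiff ℝ ∞ f) (hη : ContDiff ℝ ∞ η) : ContDiff ℝ ∞ (cc f η) := by
  apply ContDiff.cross_comp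
  · exact ((pd_contDiff hf 0).comp contDiff_snd).add
      (contDiff_fst.smul ((pd_contDiff hη 0).comp contDiff_snd))
  · exact ((pd_contDiff hf 1).comp contDiff_snd).add
      (contDiff_fst.smul ((pd_contDiff hη 1).comp contDiff_snd))

/-- The open set where the perturbed cross product does not vanish. -/
def UU : Set (ℝ × E2) := {p | cc f η p ≠ 0}

lemma isOpen_UU (hf : ContDiff ℝ ∞ f) (hη : ContDiff ℝ ∞ η) : IsOpen (UU (f := f) (η := η)) :=
  isOpen_compl_iff.mpr (isClosed_singleton.preimage (contDiff_cc hf hη).continuous)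

lemma contDiffAt_GG (hf : ContDiff ℝ ∞ f) (hη : ContDiff ℝ ∞ η) {p : ℝ × E2} (hp : cc f η p ≠ 0) :
    ContDiffAt ℝ ∞ (GG f η) p := by
  have h1 : ContDiffAt ℝ ∞ (cc f η) p := (contDiff_cc hf hη).contDiffAt
  have h2 : ContDiffAt ℝ ∞ (fun q => ‖cc f η q‖) p := h1.norm ℝ hp
  exact (h2.inv (norm_ne_zero_iff.mpr hp)).smul h1

lemma gmat_apply (X : E2) (α β : Fin 2) : gmat f X α β = ⟪pd α f X, pd β f X⟫ := rfl


lemma det_gmat (X : E2) :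
    (gmat f X).det
      = ⟪cross (pd 0 f X) (pd 1 f X), cross (pd 0 f X) (pd 1 f X)⟫ := by
  rw [Matrix.det_fin_two, lagrange, gmat_apply, gmat_apply, gmat_apply, gmat_apply,
    real_inner_comm (pd 1 f X) (pd 0 f X)]
  ring

lemma det_gmat_ne_zero (himm : ∀ X : E2, cross (pd 0 f X) (pd 1 f X) ≠ 0) (X : E2) : (gmat f X).det ≠ 0 := by
  rw [det_gmat]
  exact inner_self_ne_zero.mpr (himm X)

lemma gmat_inv_mul (himm : ∀ X : E2, cross (pd 0 f X) (pd 1 f X) ≠ 0) (X : E2) : (gmat f X)⁻¹ * gmat f X = 1 :=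
  Matrix.nonsing_inv_mul _ (isUnit_iff_ne_zero.mpr (det_gmat_ne_zero himm X))

lemma dual_pairing (himm : ∀ X : E2, cross (pd 0 f X) (pd 1 f X) ≠ 0) (X : E2) (μ ν : Fin 2) :
    ⟪dualBasis f X μ, pd ν f X⟫ = (1 : Matrix (Fin 2) (Fin 2) ℝ) μ ν := by
  rw [← gmat_inv_mul himm X, Matrix.mul_apply, dualBasis, sum_inner]
  exact Finset.sum_congr rfl fun β _ => by rw [real_inner_smul_left, gmat_apply]

lemma inner_cn (X : E2) (ν : Fin 2) :
    ⟪cross (pd 0 f X) (pd 1 f X), pd ν f X⟫ = 0 := by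
  fin_cases ν
  · exact inner_cross_self_left _ _
  · exact inner_cross_self_right _ _

lemma n_orth (X : E2) (ν : Fin 2) : ⟪unitNormal f X, pd ν f X⟫ = 0 := by
  rw [unitNormal, real_inner_smul_left, inner_cn, mul_zero]

lemma n_unit (himm : ∀ X : E2, cross (pd 0 f X) (pd 1 f X) ≠ 0) (X : E2) : ⟪unitNormal f X, unitNormal f X⟫ = 1 := by
  rw [unitNormal, real_inner_smul_left, real_inner_smul_right,
    real_inner_self_eq_norm_sq]
  have : ‖cross (pd 0 f X) (pd 1 f X)‖ ≠ 0 := norm_ne_zero_iff.mpr (himm X)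
  field_simp

lemma n_dual_orth (X : E2) (μ : Fin 2) : ⟪unitNormal f X, dualBasis f X μ⟫ = 0 := by
  rw [dualBasis, inner_sum]
  refine Finset.sum_eq_zero fun β _ => ?_
  rw [real_inner_smul_right, n_orth, mul_zero]

lemma differentiableAt_gmat_entry (hf : ContDiff ℝ ∞ f) (X0 : E2) (α β : Fin 2) :
    DifferentiableAt ℝ (fun X => gmat f X α β) X0 := by
  simp only [gmat_apply]
  exact ((pd_contDiff hf α).differentiable (by norm_num)).inner ℝ
    ((pd_contDiff hf β).differentiable (by norm_num)) |>.differentiableAt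

lemma differentiableAt_det_gmat (hf : ContDiff ℝ ∞ f) (X0 : E2) :
    DifferentiableAt ℝ (fun X => (gmat f X).det) X0 := by
  have : (fun X => (gmat f X).det)
      = fun X => gmat f X 0 0 * gmat f X 1 1 - gmat f X 0 1 * gmat f X 1 0 := by
    funext X; rw [Matrix.det_fin_two]
  rw [this]
  exact ((differentiableAt_gmat_entry hf X0 0 0).mul (differentiableAt_gmat_entry hf X0 1 1)).sub
    ((differentiableAt_gmat_entry hf X0 0 1).mul (differentiableAt_gmat_entry hf X0 1 0))

lemma differentiableAt_gmat_inv (himm : ∀ X : E2, cross (pd 0 f X) (pd 1 f X) ≠ 0) (hf : ContDiff ℝ ∞ f) (X0 : E2) (α β : Fin 2) :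
    DifferentiableAt ℝ (fun X => (gmat f X)⁻¹ α β) X0 := by
  have hform : ∀ X, (gmat f X)⁻¹ α β
      = ((gmat f X).det)⁻¹ * (gmat f X).adjugate α β := by
    intro X
    rw [Matrix.inv_def, Matrix.smul_apply, Ring.inverse_eq_inv', smul_eq_mul]
  have hadj : DifferentiableAt ℝ (fun X => (gmat f X).adjugate α β) X0 := by
    have : (fun X => (gmat f X).adjugate α β)
        = fun X => (!![gmat f X 1 1, -gmat f X 0 1; -gmat f X 1 0, gmat f X 0 0] : Matrix (Fin 2) (Fin 2) ℝ) α β := by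
      funext X; rw [Matrix.adjugate_fin_two]
    rw [this]
    fin_cases α <;> fin_cases β <;>
      simp only [Matrix.cons_val', Matrix.cons_val_zero, Matrix.cons_val_one,
        Matrix.head_cons, Matrix.head_fin_const, Matrix.empty_val', Matrix.cons_val_fin_one] <;>
      first
        | exact differentiableAt_gmat_entry hf X0 1 1
        | exact (differentiableAt_gmat_entry hf X0 0 1).neg
        | exact (differentiableAt_gmat_entry hf X0 1 0).neg
        | exact differentiableAt_gmat_entry hf X0 0 0
  simp only [hform]
  exact ((differentiableAt_det_gmat hf X0).inv (det_gmat_ne_zero himm X0)).mul hadj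

lemma differentiableAt_dualBasis (himm : ∀ X : E2, cross (pd 0 f X) (pd 1 f X) ≠ 0) (hf : ContDiff ℝ ∞ f) (X0 : E2) (μ : Fin 2) :
    DifferentiableAt ℝ (fun X => dualBasis f X μ) X0 := by
  unfold dualBasis
  apply DifferentiableAt.fun_sum
  intro β _
  exact (differentiableAt_gmat_inv himm hf X0 μ β).smul
    ((pd_contDiff hf β).differentiable (by norm_num)).differentiableAt

lemma cross_bilin (u u' v v' : E3) (s t : ℝ) :
    cross (u + s • u') (v + t • v')
      = cross u v + s • cross u' v + t • cross u v' + (s*t) • cross u' v' := by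
  ext i
  fin_cases i <;>
    simp [cross, PiLp.add_apply, PiLp.smul_apply, smul_eq_mul] <;> ring

lemma cross_antisymm3 (u v : E3) : cross u v = -cross v u := by
  ext i
  fin_cases i <;> simp [cross, PiLp.neg_apply] <;> ring

/-- The first variation of the (unnormalized) normal. -/
def dvec (f η : E2 → E3) (X : E2) : E3 :=
  cross (pd 0 η X) (pd 1 f X) + cross (pd 0 f X) (pd 1 η X)

lemma hasDerivAt_cc (X : E2) :
    HasDerivAt (fun t : ℝ => cc f η (t, X)) (dvec f η X) 0 := by
  have hrepr : (fun t : ℝ => cc f η (t, X))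
      = fun t : ℝ => cross (pd 0 f X) (pd 1 f X) + t • dvec f η X
          + (t*t) • cross (pd 0 η X) (pd 1 η X) := by
    funext t
    simp only [cc, cross_bilin, dvec]
    module
  rw [hrepr]
  have h1 : HasDerivAt (fun t : ℝ => t • dvec f η X) (dvec f η X) 0 := by
    simpa using (hasDerivAt_id (0:ℝ)).smul_const (dvec f η X)
  have h2 : HasDerivAt (fun t : ℝ => (t*t) • cross (pd 0 η X) (pd 1 η X)) 0 0 := by
    have := ((hasDerivAt_id (0:ℝ)).mul (hasDerivAt_id 0)).smul_const
      (cross (pd 0 η X) (pd 1 η X))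
    simpa using this
  simpa using ((hasDerivAt_const (0:ℝ) _).fun_add h1).fun_add h2

lemma hasDerivAt_GG_eps (himm : ∀ X : E2, cross (pd 0 f X) (pd 1 f X) ≠ 0) (X : E2) :
    HasDerivAt (fun t : ℝ => GG f η (t, X))
      ((-((⟪cross (pd 0 f X) (pd 1 f X), dvec f η X⟫
            + ⟪dvec f η X, cross (pd 0 f X) (pd 1 f X)⟫)
          / (2 * ‖cross (pd 0 f X) (pd 1 f X)‖)
          / ‖cross (pd 0 f X) (pd 1 f X)‖^2)) • cross (pd 0 f X) (pd 1 f X)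
        + ‖cross (pd 0 f X) (pd 1 f X)‖⁻¹ • dvec f η X) 0 := by
  set c0 := cross (pd 0 f X) (pd 1 f X) with hc0
  have hr : HasDerivAt (fun t : ℝ => cc f η (t, X)) (dvec f η X) 0 := hasDerivAt_cc X
  have hr0 : cc f η (0, X) = c0 := cc_zero X
  have hin : HasDerivAt (fun t : ℝ => ⟪cc f η (t, X), cc f η (t, X)⟫)
      (⟪c0, dvec f η X⟫ + ⟪dvec f η X, c0⟫) 0 := by
    have := hr.inner ℝ hr
    rwa [hr0] at this
  have hpos : ⟪c0, c0⟫ ≠ 0 := inner_self_ne_zero.mpr (himm X)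
  have hsqrt : HasDerivAt (fun t : ℝ => Real.sqrt ⟪cc f η (t, X), cc f η (t, X)⟫)
      ((⟪c0, dvec f η X⟫ + ⟪dvec f η X, c0⟫) / (2 * Real.sqrt ⟪c0, c0⟫)) 0 := by
    have := hin.sqrt (by rwa [hr0])
    rwa [hr0] at this
  have hnormeq : (fun t : ℝ => Real.sqrt ⟪cc f η (t, X), cc f η (t, X)⟫)
      = fun t : ℝ => ‖cc f η (t, X)‖ := by
    funext t
    rw [real_inner_self_eq_norm_mul_norm, Real.sqrt_mul_self (norm_nonneg _)]
  have hsq0 : Real.sqrt ⟪c0, c0⟫ = ‖c0‖ := by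
    rw [real_inner_self_eq_norm_mul_norm, Real.sqrt_mul_self (norm_nonneg _)]
  rw [hnormeq, hsq0] at hsqrt
  have hn0 : ‖cc f η (0, X)‖ ≠ 0 := by rw [hr0]; exact norm_ne_zero_iff.mpr (himm X)
  have hinv : HasDerivAt (fun t : ℝ => ‖cc f η (t, X)‖⁻¹)
      (-((⟪c0, dvec f η X⟫ + ⟪dvec f η X, c0⟫) / (2 * ‖c0‖)) / ‖cc f η (0,X)‖^2) 0 :=
    hsqrt.inv hn0
  rw [hr0] at hinv
  have := hinv.fun_smul hr
  rw [hr0] at this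
  rw [neg_div, add_comm (‖c0‖⁻¹ • dvec f η X)] at this
  exact this

lemma hasDerivAt_GG_eps' (himm : ∀ X : E2, cross (pd 0 f X) (pd 1 f X) ≠ 0) (X : E2) :
    HasDerivAt (fun t : ℝ => GG f η (t, X))
      (-∑ μ : Fin 2, ⟪unitNormal f X, pd μ η X⟫ • dualBasis f X μ) 0 := by
  have h := hasDerivAt_GG_eps (f := f) (η := η) himm X
  set c0 := cross (pd 0 f X) (pd 1 f X) with hc0
  set d := dvec f η X with hd
  set A : ℝ := -((⟪c0, d⟫ + ⟪d, c0⟫) / (2 * ‖c0‖) / ‖c0‖^2) with hA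
  set V : E3 := A • c0 + ‖c0‖⁻¹ • d with hV
  set n := unitNormal f X with hn
  have hne : ‖c0‖ ≠ 0 := norm_ne_zero_iff.mpr (himm X)
  have hc0n : ‖c0‖ • n = c0 := by
    rw [hn, unitNormal, ← hc0, smul_smul]
    field_simp
    rw [one_smul]
  have hnb : ∀ μ, ⟪c0, pd μ η X⟫ = ‖c0‖ * ⟪n, pd μ η X⟫ := by
    intro μ
    conv_lhs => rw [← hc0n]
    rw [real_inner_smul_left]
  have hdualc0 : ∀ μ, ⟪dualBasis f X μ, c0⟫ = 0 := by
    intro μ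
    rw [← hc0n, real_inner_smul_right, real_inner_comm, n_dual_orth, mul_zero]
  have hda0 : ⟪d, pd 0 f X⟫ = -⟪c0, pd 0 η X⟫ := by
    rw [hd, dvec, inner_add_left, inner_cross_self_left, add_zero,
      inner_cross (pd 0 η X) (pd 1 f X) (pd 0 f X),
      cross_antisymm3 (pd 1 f X) (pd 0 f X), inner_neg_left, ← hc0,
      real_inner_comm]
  have hda1 : ⟪d, pd 1 f X⟫ = -⟪c0, pd 1 η X⟫ := by
    rw [hd, dvec, inner_add_left, inner_cross_self_right, zero_add,
      inner_cross (pd 0 f X) (pd 1 η X) (pd 1 f X),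
      inner_cross (pd 1 η X) (pd 1 f X) (pd 0 f X),
      cross_antisymm3 (pd 1 f X) (pd 0 f X), inner_neg_left, ← hc0,
      real_inner_comm]
  have hdc0 : ⟪d, c0⟫ = ⟪c0, d⟫ := real_inner_comm _ _
  set w : E3 := V + ∑ μ : Fin 2, ⟪n, pd μ η X⟫ • dualBasis f X μ with hw
  have hsum_a : ∀ ν : Fin 2,
      ⟪∑ μ : Fin 2, ⟪n, pd μ η X⟫ • dualBasis f X μ, pd ν f X⟫ = ⟪n, pd ν η X⟫ := by
    intro ν
    rw [sum_inner]
    have hterm : ∀ μ : Fin 2, ⟪(⟪n, pd μ η X⟫ : ℝ) • dualBasis f X μ, pd ν f X⟫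
        = ⟪n, pd μ η X⟫ * (1 : Matrix (Fin 2) (Fin 2) ℝ) μ ν := by
      intro μ; rw [real_inner_smul_left, dual_pairing himm]
    rw [Fin.sum_univ_two, hterm 0, hterm 1]
    fin_cases ν <;> simp [Matrix.one_apply]
  have hVa : ∀ ν, ⟪V, pd ν f X⟫ = -⟪n, pd ν η X⟫ := by
    intro ν
    rw [hV, inner_add_left, real_inner_smul_left, real_inner_smul_left, inner_cn,
      mul_zero, zero_add]
    fin_cases ν
    · show ‖c0‖⁻¹ * ⟪d, pd 0 f X⟫ = -⟪n, pd 0 η X⟫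
      rw [hda0, hnb 0]; field_simp
    · show ‖c0‖⁻¹ * ⟪d, pd 1 f X⟫ = -⟪n, pd 1 η X⟫
      rw [hda1, hnb 1]; field_simp
  have hwa : ∀ ν, ⟪w, pd ν f X⟫ = 0 := by
    intro ν
    rw [hw, inner_add_left, hVa, hsum_a]
    ring
  have hwc : ⟪w, c0⟫ = 0 := by
    have hsumc : ⟪∑ μ : Fin 2, ⟪n, pd μ η X⟫ • dualBasis f X μ, c0⟫ = 0 := by
      rw [sum_inner]
      exact Finset.sum_eq_zero fun μ _ => by
        rw [real_inner_smul_left, hdualc0, mul_zero]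
    rw [hw, inner_add_left, hsumc, add_zero, hV, inner_add_left,
      real_inner_smul_left, real_inner_smul_left,
      real_inner_self_eq_norm_sq, hA, hdc0]
    field_simp
    ring
  have hw0 : w = 0 := eq_zero_of_orth (pd 0 f X) (pd 1 f X) w (himm X) (hwa 0) (hwa 1) hwc
  have hVrepr : V = -∑ μ : Fin 2, ⟪n, pd μ η X⟫ • dualBasis f X μ :=
    eq_neg_of_add_eq_zero_left hw0
  rwa [hVrepr] at h


lemma E2_decomp (x : E2) : x = ∑ β : Fin 2, x β • EuclideanSpace.single β 1 := by
  ext i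
  fin_cases i <;>
    simp [Fin.sum_univ_two, EuclideanSpace.single_apply, PiLp.add_apply, PiLp.smul_apply]

lemma dGG_eps (hf : ContDiff ℝ ∞ f) (hη : ContDiff ℝ ∞ η)
    (himm : ∀ X : E2, cross (pd 0 f X) (pd 1 f X) ≠ 0) (X : E2) :
    fderiv ℝ (GG f η) (0, X) ((1:ℝ), (0:E2))
      = -∑ μ : Fin 2, ⟪unitNormal f X, pd μ η X⟫ • dualBasis f X μ := by
  have h0 : cc f η (0, X) ≠ 0 := by rw [cc_zero]; exact himm X
  have hdiff : DifferentiableAt ℝ (GG f η) (0, X) :=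
    (contDiffAt_GG hf hη h0).differentiableAt (by norm_num)
  have hγ : HasDerivAt (fun t : ℝ => (t, X)) ((1:ℝ), (0:E2)) 0 :=
    (hasDerivAt_id' (x := (0:ℝ))).prodMk (hasDerivAt_const 0 X)
  have hcomp : HasDerivAt (fun t : ℝ => GG f η (t, X))
      (fderiv ℝ (GG f η) (0, X) ((1:ℝ), (0:E2))) 0 :=
    by have := hdiff.hasFDerivAt.comp_hasDerivAt 0 hγ; exact this
  exact hcomp.unique (hasDerivAt_GG_eps' himm X)

lemma pd_unitNormal_pert (hf : ContDiff ℝ ∞ f) (hη : ContDiff ℝ ∞ η)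
    (ε : ℝ) (Y : E2) (hcc : cc f η (ε, Y) ≠ 0) (α : Fin 2) :
    pd α (unitNormal (fun Z => f Z + ε • η Z)) Y
      = fderiv ℝ (GG f η) (ε, Y) ((0:ℝ), EuclideanSpace.single α 1) := by
  have hdiff : DifferentiableAt ℝ (GG f η) (ε, Y) :=
    (contDiffAt_GG hf hη hcc).differentiableAt (by norm_num)
  have hpart : HasFDerivAt (fun Z : E2 => GG f η (ε, Z))
      ((fderiv ℝ (GG f η) (ε, Y)).comp (ContinuousLinearMap.inr ℝ ℝ E2)) Y :=
    hdiff.hasFDerivAt.comp Y (hasFDerivAt_prodMk_right ε Y)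
  have heq : unitNormal (fun Z => f Z + ε • η Z) = fun Z => GG f η (ε, Z) := by
    funext Z; exact unitNormal_pert hf hη ε Z
  rw [pd, heq, hpart.fderiv]
  rfl

lemma pd_unitNormal_base (hf : ContDiff ℝ ∞ f) (hη : ContDiff ℝ ∞ η)
    (himm : ∀ X : E2, cross (pd 0 f X) (pd 1 f X) ≠ 0) (Y : E2) (α : Fin 2) :
    pd α (unitNormal f) Y
      = fderiv ℝ (GG f η) (0, Y) ((0:ℝ), EuclideanSpace.single α 1) := by
  have hcc : cc f η (0, Y) ≠ 0 := by rw [cc_zero]; exact himm Y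
  have h := pd_unitNormal_pert hf hη 0 Y hcc α
  have heta : (fun Z => f Z + (0:ℝ) • η Z) = f := by funext Z; simp
  rwa [heta] at h

lemma diffAt_unitNormal (hf : ContDiff ℝ ∞ f) (hη : ContDiff ℝ ∞ η)
    (himm : ∀ X : E2, cross (pd 0 f X) (pd 1 f X) ≠ 0) (Y : E2) :
    DifferentiableAt ℝ (unitNormal f) Y := by
  have h0 : cc f η (0, Y) ≠ 0 := by rw [cc_zero]; exact himm Y
  have hdiff : DifferentiableAt ℝ (GG f η) (0, Y) :=
    (contDiffAt_GG hf hη h0).differentiableAt (by norm_num)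
  have heq : unitNormal f = fun Z => GG f η ((0:ℝ), Z) := by
    funext Z; exact unitNormal_base hf hη Z
  rw [heq]
  exact hdiff.comp Y ((differentiableAt_const (0:ℝ)).prodMk differentiableAt_id)

lemma pd_deltaN (hf : ContDiff ℝ ∞ f) (hη : ContDiff ℝ ∞ η)
    (himm : ∀ X : E2, cross (pd 0 f X) (pd 1 f X) ≠ 0) (X0 : E2) (α : Fin 2) :
    pd α (fun Y => -∑ μ : Fin 2, ⟪unitNormal f Y, pd μ η Y⟫ • dualBasis f Y μ) X0
      = -∑ μ : Fin 2,
          (⟪unitNormal f X0, pd μ η X0⟫ • pd α (fun Y => dualBasis f Y μ) X0 +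
            ⟪pd α (unitNormal f) X0, pd μ η X0⟫ • dualBasis f X0 μ +
            ⟪unitNormal f X0, pd α (pd μ η) X0⟫ • dualBasis f X0 μ) := by
  have hn_diff : DifferentiableAt ℝ (unitNormal f) X0 := diffAt_unitNormal hf hη himm X0
  have hb_diff : ∀ μ : Fin 2, DifferentiableAt ℝ (pd μ η) X0 := fun μ =>
    ((pd_contDiff hη μ).differentiable (by norm_num)).differentiableAt
  have hdual_diff : ∀ μ : Fin 2, DifferentiableAt ℝ (fun Y => dualBasis f Y μ) X0 :=
    fun μ => differentiableAt_dualBasis himm hf X0 μ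
  have hs_diff : ∀ μ : Fin 2,
      DifferentiableAt ℝ (fun Y => ⟪unitNormal f Y, pd μ η Y⟫) X0 :=
    fun μ => hn_diff.inner ℝ (hb_diff μ)
  have hterm : ∀ μ : Fin 2, HasFDerivAt
      (fun Y => ⟪unitNormal f Y, pd μ η Y⟫ • dualBasis f Y μ)
      ((⟪unitNormal f X0, pd μ η X0⟫ : ℝ) • fderiv ℝ (fun Y => dualBasis f Y μ) X0
        + (fderiv ℝ (fun Y => ⟪unitNormal f Y, pd μ η Y⟫) X0).smulRight (dualBasis f X0 μ)) X0 :=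
    fun μ => (hs_diff μ).hasFDerivAt.smul (hdual_diff μ).hasFDerivAt
  have hsum : HasFDerivAt
      (fun Y => -∑ μ : Fin 2, ⟪unitNormal f Y, pd μ η Y⟫ • dualBasis f Y μ)
      (-∑ μ : Fin 2,
        ((⟪unitNormal f X0, pd μ η X0⟫ : ℝ) • fderiv ℝ (fun Y => dualBasis f Y μ) X0
          + (fderiv ℝ (fun Y => ⟪unitNormal f Y, pd μ η Y⟫) X0).smulRight (dualBasis f X0 μ))) X0 :=
    (HasFDerivAt.fun_sum (fun μ _ => hterm μ)).neg
  rw [pd, hsum.fderiv]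
  simp only [ContinuousLinearMap.neg_apply, ContinuousLinearMap.sum_apply,
    ContinuousLinearMap.add_apply, ContinuousLinearMap.smul_apply,
    ContinuousLinearMap.smulRight_apply]
  congr 1
  refine Finset.sum_congr rfl fun μ _ => ?_
  rw [fderiv_inner_apply ℝ hn_diff (hb_diff μ)]
  have h1 : fderiv ℝ (fun Y => dualBasis f Y μ) X0 (EuclideanSpace.single α 1)
      = pd α (fun Y => dualBasis f Y μ) X0 := rfl
  have h2 : fderiv ℝ (pd μ η) X0 (EuclideanSpace.single α 1) = pd α (pd μ η) X0 := rfl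
  have h3 : fderiv ℝ (unitNormal f) X0 (EuclideanSpace.single α 1) = pd α (unitNormal f) X0 := rfl
  rw [h1, h2, h3, add_smul]
  abel

end Main

/-- **Proposition 4.** For each `S` and `α`, the map
`ε ↦ [∂n_ε/∂X^α](θ_ε(S))` is differentiable at `ε = 0` with derivative
`δn̂_{,α} = − ( n̂·η̂_{,μ} ) â^μ_{,α} − ( n̂_{,α}·η̂_{,μ} ) â^μ − ( n̂·η̂_{,μα} ) â^μ + n̂_{,αβ} ξ^β`
(surface quantities evaluated at `θ(S)`, summed over `μ` and `β`). -/
theorem first_variation_of_normal_derivative_along_rod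
    (f η : E2 → E3) (θ ξ : ℝ → E2)
    (hf : ContDiff ℝ (⊤ : ℕ∞) f) (hη : ContDiff ℝ (⊤ : ℕ∞) η)
    (hθ : ContDiff ℝ (⊤ : ℕ∞) θ) (hξ : ContDiff ℝ (⊤ : ℕ∞) ξ)
    (himm : ∀ X : E2, cross (pd 0 f X) (pd 1 f X) ≠ 0) :
    ∀ (S : ℝ) (α : Fin 2),
      HasDerivAt
        (fun ε : ℝ => pd α (unitNormal (fun Y => f Y + ε • η Y)) (θ S + ε • ξ S))
        ((-∑ μ : Fin 2,
            (⟪unitNormal f (θ S), pd μ η (θ S)⟫ • pd α (fun Y => dualBasis f Y μ) (θ S) +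
              ⟪pd α (unitNormal f) (θ S), pd μ η (θ S)⟫ • dualBasis f (θ S) μ +
              ⟪unitNormal f (θ S), pd α (pd μ η) (θ S)⟫ • dualBasis f (θ S) μ)) +
          ∑ β : Fin 2, ξ S β • pd β (pd α (unitNormal f)) (θ S))
        0 := by
  intro S α
  have hf' : ContDiff ℝ ∞ f := hf.of_le (by simp)
  have hη' : ContDiff ℝ ∞ η := hη.of_le (by simp)
  set eα : E2 := EuclideanSpace.single α 1 with heα
  set F' := fderiv ℝ (GG f η) with hF'def
  have h00 : cc f η (0, θ S) ≠ 0 := by rw [cc_zero]; exact himm (θ S)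
  have hUopen : IsOpen (UU (f := f) (η := η)) := isOpen_UU hf' hη'
  have hUmem : ((0:ℝ), θ S) ∈ UU (f := f) (η := η) := h00
  have hGGcd : ContDiffOn ℝ ∞ (GG f η) (UU (f := f) (η := η)) :=
    fun p hp => (contDiffAt_GG hf' hη' hp).contDiffWithinAt
  have hF'cd : ContDiffOn ℝ ∞ F' (UU (f := f) (η := η)) :=
    hGGcd.fderiv_of_isOpen hUopen (le_of_eq rfl)
  have hF'diff : DifferentiableAt ℝ F' (0, θ S) :=
    ((hF'cd.contDiffAt (hUopen.mem_nhds hUmem)).differentiableAt (by norm_num))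
  set D := fderiv ℝ F' (0, θ S) with hDdef
  -- the curve
  have hcurve : HasDerivAt (fun ε : ℝ => ((ε : ℝ), θ S + ε • ξ S)) ((1:ℝ), ξ S) 0 := by
    have h2 : HasDerivAt (fun ε : ℝ => θ S + ε • ξ S) (ξ S) 0 := by
      simpa using (hasDerivAt_const (0:ℝ) (θ S)).fun_add ((hasDerivAt_id (0:ℝ)).smul_const (ξ S))
    exact (hasDerivAt_id' (x := (0:ℝ))).prodMk h2
  have hγ0 : ((0:ℝ), θ S + (0:ℝ) • ξ S) = ((0:ℝ), θ S) := by simp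
  -- derivative of the composed map
  have hpt : HasFDerivAt F' D ((0:ℝ), θ S + (0:ℝ) • ξ S) := by
    rw [hγ0]; exact hF'diff.hasFDerivAt
  have hΦ : HasDerivAt (fun ε : ℝ => F' (ε, θ S + ε • ξ S)) (D ((1:ℝ), ξ S)) 0 :=
    hpt.comp_hasDerivAt 0 hcurve
  have hΦv : HasDerivAt (fun ε : ℝ => F' (ε, θ S + ε • ξ S) ((0:ℝ), eα))
      (D ((1:ℝ), ξ S) ((0:ℝ), eα)) 0 := by
    simpa using hΦ.clm_apply (hasDerivAt_const (0:ℝ) ((0:ℝ), eα))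
  -- eventual equality
  have hccont : Continuous fun ε : ℝ => ((ε : ℝ), θ S + ε • ξ S) := by fun_prop
  have hev : (fun ε : ℝ => pd α (unitNormal (fun Y => f Y + ε • η Y)) (θ S + ε • ξ S))
      =ᶠ[nhds (0:ℝ)] fun ε : ℝ => F' (ε, θ S + ε • ξ S) ((0:ℝ), eα) := by
    have hpre : IsOpen ((fun ε : ℝ => ((ε : ℝ), θ S + ε • ξ S)) ⁻¹' UU (f := f) (η := η)) :=
      hUopen.preimage hccont
    have hmem0 : (0:ℝ) ∈ (fun ε : ℝ => ((ε : ℝ), θ S + ε • ξ S)) ⁻¹' UU (f := f) (η := η) := by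
      show ((0:ℝ), θ S + (0:ℝ) • ξ S) ∈ UU (f := f) (η := η)
      rw [hγ0]; exact hUmem
    filter_upwards [hpre.mem_nhds hmem0] with ε hε
    exact pd_unitNormal_pert hf' hη' ε _ hε α
  have hmain : HasDerivAt
      (fun ε : ℝ => pd α (unitNormal (fun Y => f Y + ε • η Y)) (θ S + ε • ξ S))
      (D ((1:ℝ), ξ S) ((0:ℝ), eα)) 0 := hΦv.congr_of_eventuallyEq hev
  -- identify the derivative value
  have hsymm : ∀ v w : ℝ × E2, D v w = D w v := by
    intro v w
    refine second_derivative_symmetric_of_eventually (f := GG f η) ?_ hF'diff.hasFDerivAt v w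
    filter_upwards [hUopen.mem_nhds hUmem] with y hy
    exact ((contDiffAt_GG hf' hη' hy).differentiableAt (by norm_num)).hasFDerivAt
  have hkey : ∀ (u : E2) (v : ℝ × E2),
      fderiv ℝ (fun Y : E2 => F' ((0:ℝ), Y) v) (θ S) u = D ((0:ℝ), u) v := by
    intro u v
    have hpart : HasFDerivAt (fun Y : E2 => F' ((0:ℝ), Y))
        (D.comp (ContinuousLinearMap.inr ℝ ℝ E2)) (θ S) :=
      hF'diff.hasFDerivAt.comp (θ S) (hasFDerivAt_prodMk_right 0 (θ S))
    have happ : HasFDerivAt (fun Y : E2 => F' ((0:ℝ), Y) v)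
        ((ContinuousLinearMap.apply ℝ E3 v).comp (D.comp (ContinuousLinearMap.inr ℝ ℝ E2)))
        (θ S) :=
      ((ContinuousLinearMap.apply ℝ E3 v).hasFDerivAt).comp (θ S) hpart
    rw [happ.fderiv]
    rfl
  have hterm1 : D ((1:ℝ), (0:E2)) ((0:ℝ), eα)
      = -∑ μ : Fin 2,
          (⟪unitNormal f (θ S), pd μ η (θ S)⟫ • pd α (fun Y => dualBasis f Y μ) (θ S) +
            ⟪pd α (unitNormal f) (θ S), pd μ η (θ S)⟫ • dualBasis f (θ S) μ +
            ⟪unitNormal f (θ S), pd α (pd μ η) (θ S)⟫ • dualBasis f (θ S) μ) := by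
    rw [hsymm ((1:ℝ), (0:E2)) ((0:ℝ), eα), ← hkey eα ((1:ℝ), (0:E2))]
    have hfun : (fun Y : E2 => F' ((0:ℝ), Y) ((1:ℝ), (0:E2)))
        = fun Y : E2 => -∑ μ : Fin 2, ⟪unitNormal f Y, pd μ η Y⟫ • dualBasis f Y μ := by
      funext Y
      exact dGG_eps hf' hη' himm Y
    rw [hfun]
    exact pd_deltaN hf' hη' himm (θ S) α
  have hterm2 : ∀ β : Fin 2, D ((0:ℝ), EuclideanSpace.single β 1) ((0:ℝ), eα)
      = pd β (pd α (unitNormal f)) (θ S) := by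
    intro β
    rw [← hkey (EuclideanSpace.single β 1) ((0:ℝ), eα)]
    have hfun : (fun Y : E2 => F' ((0:ℝ), Y) ((0:ℝ), eα)) = pd α (unitNormal f) := by
      funext Y
      exact (pd_unitNormal_base hf' hη' himm Y α).symm
    rw [hfun]
    rfl
  have hsum2 : ξ S 0 • EuclideanSpace.single (0 : Fin 2) 1
      + ξ S 1 • EuclideanSpace.single (1 : Fin 2) 1 = ξ S := by
    conv_rhs => rw [E2_decomp (ξ S)]
    rw [Fin.sum_univ_two]
  have hsplit : ((1:ℝ), ξ S)
      = ((1:ℝ), (0:E2)) + ∑ β : Fin 2, ξ S β • (((0:ℝ), EuclideanSpace.single β 1) : ℝ × E2) := by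
    rw [Fin.sum_univ_two, Prod.smul_mk, Prod.smul_mk, Prod.mk_add_mk, Prod.mk_add_mk, hsum2]
    simp
  have hval : D ((1:ℝ), ξ S) ((0:ℝ), eα)
      = (-∑ μ : Fin 2,
          (⟪unitNormal f (θ S), pd μ η (θ S)⟫ • pd α (fun Y => dualBasis f Y μ) (θ S) +
            ⟪pd α (unitNormal f) (θ S), pd μ η (θ S)⟫ • dualBasis f (θ S) μ +
            ⟪unitNormal f (θ S), pd α (pd μ η) (θ S)⟫ • dualBasis f (θ S) μ)) +
        ∑ β : Fin 2, ξ S β • pd β (pd α (unitNormal f)) (θ S) := by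
    rw [hsplit, map_add, map_sum, ContinuousLinearMap.add_apply, ContinuousLinearMap.sum_apply,
      hterm1]
    congr 1
    refine Finset.sum_congr rfl fun β _ => ?_
    rw [map_smul, ContinuousLinearMap.smul_apply, hterm2 β]
  rwa [hval] at hmain
end
end

section
/- (Proposition 3) Let α₃₂ ∈ ℝ; define d₂ε(S) = (r_ε'(S)/‖r_ε'(S)‖) × n_ε(θ_ε(S)) and κ₁(ε,S) = − r_ε''(S) · d₂ε(S) / ‖r_ε'(S)‖ + α₃₂. Then for each S, ε ↦ κ₁(ε,S) is differentiable at ε = 0 with δκ₁(S) := (∂κ₁/∂ε)(0,S) = −(1/ν₃(S)) [ δr''(S)·d₂(S) + r''(S)·δd₂(S) + (κ₁(0,S) − α₃₂) δν₃(S) ], where δr''(S) := (d/dε)|_{ε=0} r_ε''(S), δd₂(S) := (d/dε)|_{ε=0} d₂ε(S), d₂(S) = d₂₀(S), and δν₃(S) := (d/dε)|_{ε=0} ‖r_ε'(S)‖. -/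
noncomputable section

open scoped RealInnerProductSpace

/-- **Proposition 3.** With `d₂ε = (r_ε'/‖r_ε'‖) × n_ε(θ_ε)` and
`κ₁(ε,S) = − r_ε''(S)·d₂ε(S)/‖r_ε'(S)‖ + α₃₂`, for each `S` the map `ε ↦ κ₁(ε,S)` is
differentiable at `ε = 0` with derivative
`δκ₁ = −(1/ν₃) [ δr''·d₂ + r''·δd₂ + (κ₁(0,S) − α₃₂) δν₃ ]`. -/
theorem first_variation_of_kappa1
    (f η : E2 → E3) (θ ξ : ℝ → E2)
    (hf : ContDiff ℝ (⊤ : ℕ∞) f) (hη : ContDiff ℝ (⊤ : ℕ∞) η)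
    (hθ : ContDiff ℝ (⊤ : ℕ∞) θ) (hξ : ContDiff ℝ (⊤ : ℕ∞) ξ)
    (himm : ∀ X : E2, cross (pd 0 f X) (pd 1 f X) ≠ 0)
    (r : ℝ → E3) (hr : r = fun S => f (θ S))
    (ν₃ : ℝ → ℝ) (hν₃ : ν₃ = fun S => ‖deriv r S‖)
    (hν : ∀ S : ℝ, ν₃ S ≠ 0)
    (rr : ℝ → ℝ → E3)
    (hrr : rr = fun ε t => f (θ t + ε • ξ t) + ε • η (θ t + ε • ξ t))
    (d₂ : ℝ → ℝ → E3)
    (hd₂ : d₂ = fun ε S =>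
      cross (‖deriv (rr ε) S‖⁻¹ • deriv (rr ε) S)
        (unitNormal (fun Y => f Y + ε • η Y) (θ S + ε • ξ S)))
    (α₃₂ : ℝ) (κ₁ : ℝ → ℝ → ℝ)
    (hκ₁ : κ₁ = fun ε S =>
      -(⟪deriv (deriv (rr ε)) S, d₂ ε S⟫ / ‖deriv (rr ε) S‖) + α₃₂)
    (S : ℝ) (δr'' δd₂ : E3) (δν : ℝ)
    (hδr'' : HasDerivAt (fun ε : ℝ => deriv (deriv (rr ε)) S) δr'' 0)
    (hδd₂ : HasDerivAt (fun ε : ℝ => d₂ ε S) δd₂ 0)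
    (hδν : HasDerivAt (fun ε : ℝ => ‖deriv (rr ε) S‖) δν 0) :
    HasDerivAt (fun ε : ℝ => κ₁ ε S)
      (-(ν₃ S)⁻¹ *
        (⟪δr'', d₂ 0 S⟫ + ⟪deriv (deriv r) S, δd₂⟫ +
          (κ₁ 0 S - α₃₂) * δν))
      0 := by
  have hrr0 : rr 0 = r := by
    subst hrr hr; funext t; simp
  have hB0 : ‖deriv (rr 0) S‖ = ν₃ S := by rw [hrr0, hν₃]
  have hBne : ‖deriv (rr 0) S‖ ≠ 0 := hB0 ▸ hν S
  have hA : HasDerivAt (fun ε : ℝ => ⟪deriv (deriv (rr ε)) S, d₂ ε S⟫)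
      (⟪δr'', d₂ 0 S⟫ + ⟪deriv (deriv (rr 0)) S, δd₂⟫) 0 := by
    simpa [add_comm] using hδr''.inner ℝ hδd₂
  have hQ : HasDerivAt
      (fun ε : ℝ => -(⟪deriv (deriv (rr ε)) S, d₂ ε S⟫ / ‖deriv (rr ε) S‖) + α₃₂)
      (-(((⟪δr'', d₂ 0 S⟫ + ⟪deriv (deriv (rr 0)) S, δd₂⟫) * ‖deriv (rr 0) S‖ -
          ⟪deriv (deriv (rr 0)) S, d₂ 0 S⟫ * δν) / ‖deriv (rr 0) S‖ ^ 2)) 0 :=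
    ((hA.div hδν hBne).neg).add_const α₃₂
  have hκ0 : κ₁ 0 S - α₃₂ = -(⟪deriv (deriv r) S, d₂ 0 S⟫ / ν₃ S) := by
    rw [hκ₁]; simp [hrr0, hν₃]
  have hfun : (fun ε : ℝ => κ₁ ε S) =
      fun ε : ℝ => -(⟪deriv (deriv (rr ε)) S, d₂ ε S⟫ / ‖deriv (rr ε) S‖) + α₃₂ := by
    rw [hκ₁]
  rw [hfun]
  convert hQ using 1
  rw [hκ0, hB0, hrr0]
  have h3 := hν S
  field_simp
  ring
end
end

section
/- For each X ∈ ℝ², let g_ε(X) be the 2×2 matrix with entries (f+εη)_{,α}(X) · (f+εη)_{,β}(X), α,β ∈ {1,2}. Then ε ↦ √(det g_ε(X)) is differentiable at ε = 0, and (d/dε)|_{ε=0} √(det g_ε(X)) = √(det g(X)) · Σ_{α=1,2} a^α(X) · η_{,α}(X), where g = g₀. -/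
noncomputable section

open scoped RealInnerProductSpace

/-- First variation of the area element: for each `X`, the map
`ε ↦ √(det g_ε(X))`, where `g_ε` is the metric of `f + εη`, is differentiable at
`ε = 0` with derivative `√(det g(X)) · Σ_α a^α(X) · η_{,α}(X)`. -/
theorem first_variation_of_area_element
    (f η : E2 → E3)
    (hf : ContDiff ℝ (⊤ : ℕ∞) f) (hη : ContDiff ℝ (⊤ : ℕ∞) η)
    (himm : ∀ X : E2, cross (pd 0 f X) (pd 1 f X) ≠ 0) :
    ∀ X : E2,
      HasDerivAt
        (fun ε : ℝ => Real.sqrt (gmat (fun Y => f Y + ε • η Y) X).det)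
        (Real.sqrt (gmat f X).det * ∑ α : Fin 2, ⟪dualBasis f X α, pd α η X⟫)
        0 := by
  intro X
  set a0 : E3 := pd 0 f X with ha0
  set a1 : E3 := pd 1 f X with ha1
  set b0 : E3 := pd 0 η X with hb0
  set b1 : E3 := pd 1 η X with hb1
  -- partial derivative of perturbed map
  have hpd : ∀ (ε : ℝ) (α : Fin 2),
      pd α (fun Y => f Y + ε • η Y) X = pd α f X + ε • pd α η X := by
    intro ε α
    unfold pd
    rw [fderiv_fun_add (hf.differentiable (by simp) X)
      (show DifferentiableAt ℝ (fun Y => ε • η Y) X from (hη.differentiable (by simp) X).const_smul ε),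
      fderiv_fun_const_smul (hη.differentiable (by simp) X)]
    simp
  -- positivity of det g
  have hdet : (gmat f X).det = ⟪a0,a0⟫ * ⟪a1,a1⟫ - ⟪a0,a1⟫ * ⟪a1,a0⟫ := by
    rw [Matrix.det_fin_two]; simp [gmat, ha0, ha1]
  have hpos : 0 < (gmat f X).det := by
    have h2 : (gmat f X).det = ⟪cross a0 a1, cross a0 a1⟫ := by
      rw [hdet]
      simp [cross, PiLp.inner_apply, RCLike.inner_apply, Fin.sum_univ_three]
      simp only [EuclideanSpace.norm_sq_eq, Fin.sum_univ_three, Real.norm_eq_abs, sq_abs, PiLp.toLp_apply, Matrix.cons_val_zero, Matrix.cons_val_one, Matrix.cons_val_two, Matrix.head_cons, Matrix.tail_cons]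
      ring
    rw [h2]
    rcases lt_or_eq_of_le (real_inner_self_nonneg (x := cross a0 a1)) with h | h
    · exact h
    · exact absurd (inner_self_eq_zero.mp h.symm) (himm X)
  -- function rewriting
  have hfun : (fun ε : ℝ => Real.sqrt (gmat (fun Y => f Y + ε • η Y) X).det)
      = fun ε : ℝ => Real.sqrt
          (⟪a0 + ε • b0, a0 + ε • b0⟫ * ⟪a1 + ε • b1, a1 + ε • b1⟫
            - ⟪a0 + ε • b0, a1 + ε • b1⟫ * ⟪a1 + ε • b1, a0 + ε • b0⟫) := by
    funext ε
    rw [Matrix.det_fin_two]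
    simp [gmat, hpd, ha0, ha1, hb0, hb1]
  rw [hfun]
  -- derivatives of the inner products
  have h0 : HasDerivAt (fun ε : ℝ => a0 + ε • b0) b0 0 := by
    simpa using (((hasDerivAt_id (0:ℝ)).smul_const b0).const_add a0)
  have h1 : HasDerivAt (fun ε : ℝ => a1 + ε • b1) b1 0 := by
    simpa using (((hasDerivAt_id (0:ℝ)).smul_const b1).const_add a1)
  have h00 : HasDerivAt (fun ε : ℝ => ⟪a0 + ε • b0, a0 + ε • b0⟫)
      (⟪a0, b0⟫ + ⟪b0, a0⟫) 0 := by simpa using h0.inner (𝕜 := ℝ) h0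
  have h11 : HasDerivAt (fun ε : ℝ => ⟪a1 + ε • b1, a1 + ε • b1⟫)
      (⟪a1, b1⟫ + ⟪b1, a1⟫) 0 := by simpa using h1.inner (𝕜 := ℝ) h1
  have h01 : HasDerivAt (fun ε : ℝ => ⟪a0 + ε • b0, a1 + ε • b1⟫)
      (⟪a0, b1⟫ + ⟪b0, a1⟫) 0 := by simpa using h0.inner (𝕜 := ℝ) h1
  have h10 : HasDerivAt (fun ε : ℝ => ⟪a1 + ε • b1, a0 + ε • b0⟫)
      (⟪a1, b0⟫ + ⟪b1, a0⟫) 0 := by simpa using h1.inner (𝕜 := ℝ) h0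
  have hD := (h00.mul h11).sub (h01.mul h10)
  simp only [zero_smul, add_zero] at hD
  have hne : ⟪a0,a0⟫ * ⟪a1,a1⟫ - ⟪a0,a1⟫ * ⟪a1,a0⟫ ≠ 0 := by
    rw [← hdet]; exact ne_of_gt hpos
  have hS := hD.sqrt (by simpa using hne)
  simp only [Pi.mul_apply, Pi.sub_apply, zero_smul, add_zero] at hS
  convert hS using 1
  -- equality of the two derivative expressions
  have e00 : (gmat f X)⁻¹ 0 0 = (gmat f X).det⁻¹ * ⟪a1,a1⟫ := by
    rw [Matrix.inv_def, Ring.inverse_eq_inv', Matrix.adjugate_fin_two]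
    simp [gmat, ha1]
  have e01 : (gmat f X)⁻¹ 0 1 = (gmat f X).det⁻¹ * (-⟪a0,a1⟫) := by
    rw [Matrix.inv_def, Ring.inverse_eq_inv', Matrix.adjugate_fin_two]
    simp [gmat, ha0, ha1]
  have e10 : (gmat f X)⁻¹ 1 0 = (gmat f X).det⁻¹ * (-⟪a1,a0⟫) := by
    rw [Matrix.inv_def, Ring.inverse_eq_inv', Matrix.adjugate_fin_two]
    simp [gmat, ha0, ha1]
  have e11 : (gmat f X)⁻¹ 1 1 = (gmat f X).det⁻¹ * ⟪a0,a0⟫ := by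
    rw [Matrix.inv_def, Ring.inverse_eq_inv', Matrix.adjugate_fin_two]
    simp [gmat, ha0]
  simp only [dualBasis, Fin.sum_univ_two, inner_add_left, real_inner_smul_left,
    e00, e01, e10, e11]
  simp only [← ha0, ← ha1, ← hb0, ← hb1]
  rw [hdet]
  set D := ⟪a0,a0⟫ * ⟪a1,a1⟫ - ⟪a0,a1⟫ * ⟪a1,a0⟫ with hDdef
  have hposD : 0 < D := hdet ▸ hpos
  set s := Real.sqrt D with hs
  have hsq : s * s = D := Real.mul_self_sqrt hposD.le
  have hspos : 0 < s := Real.sqrt_pos.mpr hposD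
  have hDinv : D⁻¹ * D = 1 := inv_mul_cancel₀ hne
  have hsym : ⟪a1, a0⟫ = ⟪a0, a1⟫ := real_inner_comm _ _
  have hc0 : ⟪b0, a0⟫ = ⟪a0, b0⟫ := real_inner_comm _ _
  have hc1 : ⟪b1, a1⟫ = ⟪a1, b1⟫ := real_inner_comm _ _
  have hc01 : ⟪b0, a1⟫ = ⟪a1, b0⟫ := real_inner_comm _ _
  have hc10 : ⟪b1, a0⟫ = ⟪a0, b1⟫ := real_inner_comm _ _
  simp only [hsym, hc0, hc1, hc01, hc10]
  rw [eq_div_iff (mul_ne_zero two_ne_zero (ne_of_gt hspos))]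
  linear_combination (2 * D⁻¹ * (⟪a1,a1⟫*⟪a0,b0⟫ - ⟪a0,a1⟫*⟪a1,b0⟫
      - ⟪a0,a1⟫*⟪a0,b1⟫ + ⟪a0,a0⟫*⟪a1,b1⟫)) * hsq
    + (2 * (⟪a1,a1⟫*⟪a0,b0⟫ - ⟪a0,a1⟫*⟪a1,b0⟫
      - ⟪a0,a1⟫*⟪a0,b1⟫ + ⟪a0,a0⟫*⟪a1,b1⟫)) * hDinv
end
end
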